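/- arXiv:2305.16815 — 11 statements merged into one kernel-verified Lean document; each statement's English description precedes it below -/
import Mathlib

section
/- In every tree with at least 3 vertices, there exists a maximum independent set that contains all leaves and contains no support vertices. -/
/-!
Among the maximum independent sets choose one containing as many leaves as possible. If a leaf
`v` were missing, maximality would force its unique neighbour `u` into the set, and exchanging
`u` for `v` gives another maximum independent set. In a connected graph on at least three
vertices no two leaves are adjacent, so `u` is not a leaf and the exchange gains a leaf, a
contradiction. A set containing every leaf cannot contain a support vertex, by independence.
-/

open SimpleGraph Finset

namespace SimpleGraph

variable {V : Type*} {G : SimpleGraph V}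

theorem isIndepSet_iff_forall_not_adj {s : Set V} :
    G.IsIndepSet s ↔ ∀ u ∈ s, ∀ w ∈ s, ¬ G.Adj u w :=
  ⟨fun hs _ hu _ hw huw => hs hu hw huw.ne huw, fun hs _ hu _ hw _ => hs _ hu _ hw⟩

theorem IsIndepSet.insert_of_disjoint_neighborSet {s : Set V} {v : V} (hs : G.IsIndepSet s)
    (hv : Disjoint (G.neighborSet v) s) : G.IsIndepSet (insert v s) :=
  hs.insert fun _ hw _ => ⟨fun hvw => hv.notMem_of_mem_left hvw hw,
    fun hwv => hv.notMem_of_mem_left hwv.symm hw⟩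

theorem Preconnected.degree_ne_one_of_adj [Fintype V] [G.LocallyFinite]
    (hG : G.Preconnected) (hV : 3 ≤ Fintype.card V) {u v : V} (huv : G.Adj u v)
    (hu : G.degree u = 1) : G.degree v ≠ 1 := by
  classical
  intro hv
  obtain ⟨z, -, hz⟩ := exists_mem_notMem_of_card_lt_card (s := {u, v}) (t := univ)
    (card_le_two.trans_lt (by rwa [card_univ]))
  have hzu : u ≠ z := by rintro rfl; simp at hz
  have hzv : v ≠ z := by rintro rfl; simp at hz
  -- A path from `u` to `z` must pass through `v`, which is a leaf but not an endpoint.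
  obtain ⟨p, hp⟩ := hG.exists_isPath u z
  have hsnd : p.snd = v := (degree_eq_one_iff_existsUnique_adj.mp hu).unique
    (p.adj_snd (Walk.not_nil_of_ne hzu)) huv
  refine hp.isTrail.not_mem_support_of_subsingleton_neighborSet huv.ne.symm hzv ?_
    (hsnd ▸ p.getVert_mem_support 1)
  obtain ⟨w, -, hw⟩ := degree_eq_one_iff_existsUnique_adj.mp hv
  exact fun a ha b hb => (hw a ha).trans (hw b hb).symm

section MaximumIndepSet

variable [Finite V] {s : Finset V} {u v : V}

theorem IsMaximumIndepSet.exists_adj_mem_of_notMem (hs : G.IsMaximumIndepSet s) (hv : v ∉ s) :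
    ∃ u ∈ s, G.Adj v u := by
  classical
  by_contra! h
  have hins : G.IsIndepSet (insert v s : Finset V) := by
    rw [coe_insert]
    exact hs.isIndepSet.insert_of_disjoint_neighborSet
      (Set.disjoint_left.mpr fun w hvw hw => h w hw hvw)
  have := hs.maximum _ hins
  rw [card_insert_of_notMem hv] at this
  omega

theorem IsMaximumIndepSet.insert_erase [DecidableEq V] (hs : G.IsMaximumIndepSet s)
    (hv : v ∉ s) (hvu : ∀ w, G.Adj v w → w = u) : G.IsMaximumIndepSet (insert v (s.erase u)) := by
  obtain ⟨u', hu's, hvu'⟩ := hs.exists_adj_mem_of_notMem hv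
  obtain rfl := hvu u' hvu'
  have hcard : #(insert v (s.erase u')) = #s := by
    rw [card_insert_of_notMem fun h => hv (mem_of_mem_erase h), card_erase_add_one hu's]
  refine ⟨?_, fun t ht => (hs.maximum t ht).trans_eq hcard.symm⟩
  have hserase : G.IsIndepSet (s.erase u' : Set V) :=
    hs.isIndepSet.mono (coe_subset.mpr (erase_subset u' s))
  rw [coe_insert]
  exact hserase.insert_of_disjoint_neighborSet
    (Set.disjoint_left.mpr fun w hvw hw => notMem_erase w s (hvu w hvw ▸ hw))

end MaximumIndepSet

theorem Preconnected.exists_isMaximumIndepSet_forall_degree_eq_one_mem [Fintype V]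
    [G.LocallyFinite] (hG : G.Preconnected) (hV : 3 ≤ Fintype.card V) :
    ∃ s : Finset V, G.IsMaximumIndepSet s ∧ ∀ v, G.degree v = 1 → v ∈ s := by
  classical
  obtain ⟨s₀, hs₀⟩ := G.maximumIndepSet_exists
  obtain ⟨s, hs, hmax⟩ := ({s | G.IsMaximumIndepSet s} : Finset (Finset V)).exists_max_image
    (fun s => #{x ∈ s | G.degree x = 1}) ⟨s₀, by simpa using hs₀⟩
  rw [mem_filter_univ] at hs
  refine ⟨s, hs, fun v hv => by_contra fun hvs => ?_⟩
  obtain ⟨u, huv, hu⟩ := degree_eq_one_iff_existsUnique_adj.mp hv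
  have hs' := hs.insert_erase hvs hu
  have hdeg : G.degree u ≠ 1 := hG.degree_ne_one_of_adj hV huv hv
  have hgain : {x ∈ s | G.degree x = 1} ⊂ {x ∈ insert v (s.erase u) | G.degree x = 1} :=
    (ssubset_iff_of_subset fun x hx => by grind).mpr ⟨v, by simp [hv], by simp [hvs]⟩
  exact (hmax _ (by simpa using hs')).not_gt (card_lt_card hgain)

end SimpleGraph

theorem stmt0_general {V : Type*} [Fintype V] (G : SimpleGraph V)
    [DecidableRel G.Adj] (hT : G.IsTree) (hn : 3 ≤ Fintype.card V) :
    ∃ s : Finset V,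
      (∀ u ∈ s, ∀ w ∈ s, ¬ G.Adj u w) ∧
      (∀ t : Finset V, (∀ u ∈ t, ∀ w ∈ t, ¬ G.Adj u w) → t.card ≤ s.card) ∧
      (∀ v, G.degree v = 1 → v ∈ s) ∧
      (∀ v ∈ s, ¬ ∃ u, G.Adj v u ∧ G.degree u = 1) := by
  obtain ⟨s, hs, hleaves⟩ :=
    hT.connected.preconnected.exists_isMaximumIndepSet_forall_degree_eq_one_mem hn
  have hindep := isIndepSet_iff_forall_not_adj.mp hs.isIndepSet
  refine ⟨s, hindep, fun t ht => hs.maximum t (isIndepSet_iff_forall_not_adj.mpr ht), hleaves, ?_⟩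
  rintro v hv ⟨u, hvu, hu⟩
  exact hindep v hv u (hleaves u hu) hvu

/-- In every tree with at least 3 vertices, there is a maximum independent set
containing all leaves and no support vertices. -/
theorem stmt0 {V : Type*} [Fintype V] [DecidableEq V] (G : SimpleGraph V)
    [DecidableRel G.Adj] (hT : G.IsTree) (hn : 3 ≤ Fintype.card V) :
    ∃ s : Finset V,
      (∀ u ∈ s, ∀ w ∈ s, ¬ G.Adj u w) ∧
      (∀ t : Finset V, (∀ u ∈ t, ∀ w ∈ t, ¬ G.Adj u w) → t.card ≤ s.card) ∧
      (∀ v, G.degree v = 1 → v ∈ s) ∧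
      (∀ v ∈ s, ¬ ∃ u, G.Adj v u ∧ G.degree u = 1) :=
  stmt0_general G hT hn
end

section
/- For every tree T with at least 2 vertices, the independence number β(T) satisfies β(T) ≤ (|T| + L(T))/2, where L(T) is the number of leaves of T. -/
open SimpleGraph Finset

/-- For every tree `T` with at least 2 vertices, `β(T) ≤ (|T| + L(T))/2`. -/
theorem stmt1 {V : Type*} [Fintype V] [DecidableEq V] (G : SimpleGraph V)
    [DecidableRel G.Adj] (hT : G.IsTree) (hn : 2 ≤ Fintype.card V)
    (s : Finset V) (hs : ∀ u ∈ s, ∀ w ∈ s, ¬ G.Adj u w) :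
    2 * s.card ≤ Fintype.card V + (univ.filter (fun v => G.degree v = 1)).card := by
  classical
  -- every vertex has positive degree
  have hdeg : ∀ v : V, 0 < G.degree v := by
    intro v
    obtain ⟨w, hw⟩ := Fintype.exists_ne_of_one_lt_card (by omega) v
    obtain ⟨p⟩ := hT.isConnected.preconnected v w
    rw [G.degree_pos_iff_exists_adj]
    exact ⟨p.getVert 1, SimpleGraph.Walk.adj_snd (SimpleGraph.Walk.not_nil_of_ne hw.symm)⟩
  -- sum of degrees over s is at most the number of edges
  have key : ∑ v ∈ s, G.degree v ≤ G.edgeFinset.card := by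
    have hdisj : ∀ u ∈ s, ∀ w ∈ s, u ≠ w →
        Disjoint (G.incidenceFinset u) (G.incidenceFinset w) := by
      intro u hu w hw huw
      rw [Finset.disjoint_left]
      intro e he he'
      rw [mem_incidenceFinset] at he he'
      exact hs u hu w hw (G.adj_of_mem_incidenceSet huw he he')
    calc ∑ v ∈ s, G.degree v = ∑ v ∈ s, (G.incidenceFinset v).card := by
          simp [card_incidenceFinset_eq_degree]
      _ = (s.biUnion (fun v => G.incidenceFinset v)).card :=
          (Finset.card_biUnion hdisj).symm
      _ ≤ G.edgeFinset.card := by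
          apply Finset.card_le_card
          intro e he
          simp only [Finset.mem_biUnion] at he
          obtain ⟨v, _, hv⟩ := he
          rw [mem_incidenceFinset] at hv
          rw [mem_edgeFinset]
          exact hv.1
  have hedge := hT.card_edgeFinset
  have h2 : 2 * s.card ≤ ∑ v ∈ s, G.degree v +
      (s.filter (fun v => G.degree v = 1)).card := by
    have : ∀ v ∈ s, 2 ≤ G.degree v + (if G.degree v = 1 then 1 else 0) := by
      intro v _
      have := hdeg v
      by_cases h : G.degree v = 1 <;> simp [h] <;> omega
    calc 2 * s.card = ∑ v ∈ s, 2 := by rw [Finset.sum_const]; ring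
      _ ≤ ∑ v ∈ s, (G.degree v + (if G.degree v = 1 then 1 else 0)) :=
          Finset.sum_le_sum this
      _ = ∑ v ∈ s, G.degree v + ∑ v ∈ s, (if G.degree v = 1 then 1 else 0) :=
          Finset.sum_add_distrib
      _ = ∑ v ∈ s, G.degree v + (s.filter (fun v => G.degree v = 1)).card := by
          rw [Finset.card_filter]
  have h3 : (s.filter (fun v => G.degree v = 1)).card ≤
      (univ.filter (fun v => G.degree v = 1)).card :=
    Finset.card_le_card (Finset.filter_subset_filter _ (Finset.subset_univ s))
  omega
end

section
/- For every tree T with at least 2 vertices, β(T) ≥ (|T| + L(T) − S(T))/2, where L(T) is the number of leaves and S(T) is the number of support vertices of T. -/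
/-!
Let `P` be the leaves that are not support vertices and `Q` the support vertices that are not
leaves. A neighbour of a vertex of `P` lies in `Q`, so `P` is independent and has no neighbours
outside `Q`. The vertices outside `P ∪ Q` induce a bipartite graph, so one colour class `c` among
them has at least half of them, and `P ∪ c` is independent with
`2 |P ∪ c| ≥ 2 |P| + (|T| - |P| - |Q|) = |T| + |P| - |Q| = |T| + L(T) - S(T)`.
-/

open SimpleGraph Finset

lemma Finset.card_sdiff_sub_card_sdiff {α : Type*} [DecidableEq α] (s t : Finset α) :
    (#(s \ t) : ℤ) - #(t \ s) = #s - #t := by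
  have hs := card_sdiff_add_card_inter s t
  have ht := card_sdiff_add_card_inter t s
  rw [inter_comm] at ht
  omega

namespace SimpleGraph

variable {V : Type*} {G : SimpleGraph V}

lemma IsBipartite.exists_isIndepSet_subset_card_le_two_mul (hG : G.IsBipartite) (t : Finset V) :
    ∃ c ⊆ t, G.IsIndepSet (c : Set V) ∧ #t ≤ 2 * #c := by
  classical
  obtain ⟨C⟩ := hG
  obtain ⟨i, -, hi⟩ := exists_le_card_fiber_of_nsmul_le_card_of_maps_to
    (f := C) (s := t) (t := univ) (b := (#t : ℚ) / 2) (fun _ _ ↦ mem_univ _) univ_nonempty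
    (by simp [mul_div_cancel₀])
  refine ⟨{v ∈ t | C v = i}, filter_subset _ _, fun u hu w hw _ huw ↦ ?_, ?_⟩
  · simp only [mem_coe, mem_filter] at hu hw
    exact C.valid huw (hu.2.trans hw.2.symm)
  · exact_mod_cast (div_le_iff₀' two_pos).1 hi

variable [Fintype V] [DecidableRel G.Adj]

variable (G) in
def leafFinset : Finset V :=
  univ.filter (fun v => G.degree v = 1)

variable (G) in
def supportVertexFinset : Finset V :=
  univ.filter (fun v => ∃ u, G.Adj v u ∧ G.degree u = 1)

lemma mem_leafFinset {v : V} : v ∈ G.leafFinset ↔ G.degree v = 1 := by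
  simp [leafFinset]

lemma mem_supportVertexFinset {v : V} :
    v ∈ G.supportVertexFinset ↔ ∃ u, G.Adj v u ∧ G.degree u = 1 := by
  simp [supportVertexFinset]

lemma mem_supportVertexFinset_sdiff_leafFinset_of_adj [DecidableEq V] {u v : V}
    (hu : u ∈ G.leafFinset \ G.supportVertexFinset) (huv : G.Adj u v) :
    v ∈ G.supportVertexFinset \ G.leafFinset := by
  rw [mem_sdiff, mem_leafFinset, mem_supportVertexFinset] at *
  exact ⟨⟨u, huv.symm, hu.1⟩, fun hv ↦ hu.2 ⟨v, huv, hv⟩⟩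

lemma IsBipartite.exists_isIndepSet_card_add_card_leafFinset_sub_card_le (hG : G.IsBipartite) :
    ∃ s : Finset V, G.IsIndepSet (s : Set V) ∧
      (Fintype.card V : ℤ) + #G.leafFinset - #G.supportVertexFinset ≤ 2 * #s := by
  classical
  set P := G.leafFinset \ G.supportVertexFinset
  set Q := G.supportVertexFinset \ G.leafFinset
  obtain ⟨c, hc, hc_indep, hc_card⟩ := hG.exists_isIndepSet_subset_card_le_two_mul (P ∪ Q)ᶜ
  have hP_indep : G.IsIndepSet (P : Set V) := fun u hu v hv _ huv ↦
    (mem_sdiff.1 (mem_supportVertexFinset_sdiff_leafFinset_of_adj hu huv)).2 (mem_sdiff.1 hv).1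
  have hPc : ∀ u ∈ P, ∀ v ∈ c, ¬ G.Adj u v := fun u hu v hv huv ↦
    mem_compl.1 (hc hv) (mem_union_right _ (mem_supportVertexFinset_sdiff_leafFinset_of_adj hu huv))
  refine ⟨P ∪ c, ?_, ?_⟩
  · rw [coe_union]
    exact Set.pairwise_union.2
      ⟨hP_indep, hc_indep, fun u hu v hv _ ↦ ⟨hPc u hu v hv, fun hvu ↦ hPc u hu v hv hvu.symm⟩⟩
  · have hPc_disj : Disjoint P c :=
      Finset.disjoint_left.2 fun _ hv hvc ↦ mem_compl.1 (hc hvc) (mem_union_left _ hv)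
    have hs : #(P ∪ c) = #P + #c := card_union_of_disjoint hPc_disj
    have hPQ : #(P ∪ Q) = #P + #Q := card_union_of_disjoint disjoint_sdiff_sdiff
    have hcompl : #(P ∪ Q)ᶜ = Fintype.card V - #(P ∪ Q) := card_compl _
    have hPQ_le := card_le_univ (P ∪ Q)
    have hLS : (#P : ℤ) - #Q = #G.leafFinset - #G.supportVertexFinset :=
      card_sdiff_sub_card_sdiff _ _
    clear_value P Q
    omega

end SimpleGraph

theorem stmt3_general {V : Type*} [Fintype V] (G : SimpleGraph V)
    [DecidableRel G.Adj] (hT : G.IsTree) :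
    ∃ s : Finset V, (∀ u ∈ s, ∀ w ∈ s, ¬ G.Adj u w) ∧
      ((Fintype.card V : ℤ)
        + (univ.filter (fun v => G.degree v = 1)).card
        - (univ.filter (fun v => ∃ u, G.Adj v u ∧ G.degree u = 1)).card)
        ≤ 2 * s.card := by
  obtain ⟨s, hs_indep, hs_card⟩ :=
    hT.isAcyclic.isBipartite.exists_isIndepSet_card_add_card_leafFinset_sub_card_le
  exact ⟨s, fun u hu w hw huw ↦ hs_indep hu hw huw.ne huw, hs_card⟩

/-- For every tree `T` with at least 2 vertices,
`β(T) ≥ (|T| + L(T) - S(T))/2`. -/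
theorem stmt3 {V : Type*} [Fintype V] [DecidableEq V] (G : SimpleGraph V)
    [DecidableRel G.Adj] (hT : G.IsTree) (hn : 2 ≤ Fintype.card V) :
    ∃ s : Finset V, (∀ u ∈ s, ∀ w ∈ s, ¬ G.Adj u w) ∧
      ((Fintype.card V : ℤ)
        + (univ.filter (fun v => G.degree v = 1)).card
        - (univ.filter (fun v => ∃ u, G.Adj v u ∧ G.degree u = 1)).card)
        ≤ 2 * s.card :=
  stmt3_general G hT
end

section
/- In every connected graph with at least 3 vertices, there exists a minimum dominating set that contains all support vertices and contains no leaves. -/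
open SimpleGraph Finset

lemma deg_one_nbr {V : Type*} [Fintype V] [DecidableEq V] (G : SimpleGraph V)
    [DecidableRel G.Adj] {u v : V} (h : G.Adj u v) (hu : G.degree u = 1) :
    G.neighborFinset u = {v} := by
  have hv : v ∈ G.neighborFinset u := by simpa using h
  have h1 : (G.neighborFinset u).card = 1 := hu
  rw [Finset.card_eq_one] at h1
  obtain ⟨a, ha⟩ := h1
  rw [ha] at hv ⊢
  simp at hv
  subst hv
  rfl

lemma no_two_leaves {V : Type*} [Fintype V] [DecidableEq V] (G : SimpleGraph V)
    [DecidableRel G.Adj] (hc : G.Connected) (hn : 3 ≤ Fintype.card V)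
    {u v : V} (h : G.Adj u v) (hu : G.degree u = 1) (hv : G.degree v = 1) : False := by
  have nu := deg_one_nbr G h hu
  have nv := deg_one_nbr G h.symm hv
  have key : ∀ x w : V, G.Walk x w → (x = u ∨ x = v) → (w = u ∨ w = v) := by
    intro x w p
    induction p with
    | nil => exact id
    | @cons a b c hab p ih =>
      intro hx
      apply ih
      rcases hx with rfl | rfl
      · have hb : b ∈ G.neighborFinset a := by simpa using hab
        rw [nu] at hb; simp at hb; right; exact hb
      · have hb : b ∈ G.neighborFinset a := by simpa using hab
        rw [nv] at hb; simp at hb; left; exact hb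
  have sub : (Finset.univ : Finset V) ⊆ {u, v} := by
    intro w _
    obtain ⟨p⟩ := hc.preconnected u w
    rcases key u w p (Or.inl rfl) with rfl | rfl <;> simp
  have hle := Finset.card_le_card sub
  rw [Finset.card_univ] at hle
  have h2 : ({u, v} : Finset V).card ≤ 2 :=
    (Finset.card_insert_le _ _).trans (by simp)
  omega

/-- In every connected graph with at least 3 vertices, there is a minimum dominating
set containing all support vertices and no leaves. -/
theorem stmt5 {V : Type*} [Fintype V] [DecidableEq V] (G : SimpleGraph V)
    [DecidableRel G.Adj] (hc : G.Connected) (hn : 3 ≤ Fintype.card V) :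
    ∃ D : Finset V,
      (∀ v : V, v ∈ D ∨ ∃ u ∈ D, G.Adj u v) ∧
      (∀ D' : Finset V, (∀ v : V, v ∈ D' ∨ ∃ u ∈ D', G.Adj u v) → D.card ≤ D'.card) ∧
      (∀ v, (∃ u, G.Adj v u ∧ G.degree u = 1) → v ∈ D) ∧
      (∀ v ∈ D, G.degree v ≠ 1) := by
  classical
  set N := Fintype.card V + 1 with hN
  let S : Finset (Finset V) :=
    Finset.univ.filter (fun D => ∀ v : V, v ∈ D ∨ ∃ u ∈ D, G.Adj u v)
  let key : Finset V → ℕ := fun D =>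
    D.card * N + (D.filter (fun v => G.degree v = 1)).card
  have hbound : ∀ E : Finset V, (E.filter (fun v => G.degree v = 1)).card < N := by
    intro E
    have h1 : (E.filter (fun v => G.degree v = 1)).card ≤ E.card :=
      Finset.card_filter_le _ _
    have h2 : E.card ≤ Fintype.card V := Finset.card_le_univ E
    omega
  have hSne : S.Nonempty := by
    refine ⟨Finset.univ, ?_⟩
    simp only [S, Finset.mem_filter, Finset.mem_univ, true_and]
    intro v; exact Or.inl trivial
  obtain ⟨D, hDS, hmin⟩ := S.exists_min_image key hSne
  have hDdom : ∀ v : V, v ∈ D ∨ ∃ u ∈ D, G.Adj u v := by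
    simpa [S] using hDS
  have hmemS : ∀ E : Finset V, (∀ v : V, v ∈ E ∨ ∃ u ∈ E, G.Adj u v) → E ∈ S := by
    intro E hE
    simp only [S, Finset.mem_filter, Finset.mem_univ, true_and]
    exact hE
  -- no leaves in D
  have hnoleaf : ∀ v ∈ D, G.degree v ≠ 1 := by
    intro v hvD hdeg
    obtain ⟨u, hnu⟩ := Finset.card_eq_one.mp hdeg
    have hadj : G.Adj v u := by
      rw [← SimpleGraph.mem_neighborFinset, hnu]; exact Finset.mem_singleton_self u
    have hne : u ≠ v := (G.ne_of_adj hadj).symm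
    by_cases huD : u ∈ D
    · -- erase v stays dominating, contradicting minimality
      have hdom' : ∀ w : V, w ∈ D.erase v ∨ ∃ x ∈ D.erase v, G.Adj x w := by
        intro w
        rcases hDdom w with hw | ⟨x, hx, hxw⟩
        · by_cases hwv : w = v
          · subst hwv
            exact Or.inr ⟨u, Finset.mem_erase.mpr ⟨hne, huD⟩, hadj.symm⟩
          · exact Or.inl (Finset.mem_erase.mpr ⟨hwv, hw⟩)
        · by_cases hxv : x = v
          · subst hxv
            have hw : w ∈ G.neighborFinset x := by simpa using hxw
            rw [hnu] at hw
            simp at hw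
            subst hw
            exact Or.inl (Finset.mem_erase.mpr ⟨hne, huD⟩)
          · exact Or.inr ⟨x, Finset.mem_erase.mpr ⟨hxv, hx⟩, hxw⟩
      have hE := hmin _ (hmemS _ hdom')
      have hcard : (D.erase v).card + 1 = D.card := Finset.card_erase_add_one hvD
      have hb := hbound (D.erase v)
      have hmul : ((D.erase v).card + 1) * N = (D.erase v).card * N + N := by ring
      have hkD : key D = D.card * N + (D.filter (fun v => G.degree v = 1)).card := rfl
      have hkE : key (D.erase v) =
          (D.erase v).card * N + ((D.erase v).filter (fun v => G.degree v = 1)).card := rfl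
      rw [hkD, hkE, ← hcard, hmul] at hE
      omega
    · -- swap v for u
      have huE : u ∉ D.erase v := fun h => huD (Finset.mem_of_mem_erase h)
      set D' := insert u (D.erase v) with hD'
      have hdom' : ∀ w : V, w ∈ D' ∨ ∃ x ∈ D', G.Adj x w := by
        intro w
        rcases hDdom w with hw | ⟨x, hx, hxw⟩
        · by_cases hwv : w = v
          · subst hwv
            exact Or.inr ⟨u, Finset.mem_insert_self _ _, hadj.symm⟩
          · exact Or.inl (Finset.mem_insert_of_mem (Finset.mem_erase.mpr ⟨hwv, hw⟩))
        · by_cases hxv : x = v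
          · subst hxv
            have hw : w ∈ G.neighborFinset x := by simpa using hxw
            rw [hnu] at hw
            simp at hw
            subst hw
            exact Or.inl (Finset.mem_insert_self _ _)
          · exact Or.inr ⟨x, Finset.mem_insert_of_mem (Finset.mem_erase.mpr ⟨hxv, hx⟩), hxw⟩
      have hcard' : D'.card = D.card := by
        rw [hD', Finset.card_insert_of_notMem huE, Finset.card_erase_add_one hvD]
      have hunotleaf : G.degree u ≠ 1 := fun hdu =>
        no_two_leaves G hc hn hadj hdeg hdu
      have hsub : D'.filter (fun w => G.degree w = 1) ⊆
          (D.filter (fun w => G.degree w = 1)).erase v := by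
        intro w hw
        rw [Finset.mem_filter] at hw
        obtain ⟨hwD', hwdeg⟩ := hw
        rw [hD', Finset.mem_insert] at hwD'
        rcases hwD' with rfl | hwE
        · exact absurd hwdeg hunotleaf
        · obtain ⟨hwv, hwD⟩ := Finset.mem_erase.mp hwE
          exact Finset.mem_erase.mpr ⟨hwv, Finset.mem_filter.mpr ⟨hwD, hwdeg⟩⟩
      have hvfilt : v ∈ D.filter (fun w => G.degree w = 1) :=
        Finset.mem_filter.mpr ⟨hvD, hdeg⟩
      have hlt : (D'.filter (fun w => G.degree w = 1)).card <
          (D.filter (fun w => G.degree w = 1)).card := by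
        calc (D'.filter (fun w => G.degree w = 1)).card
            ≤ ((D.filter (fun w => G.degree w = 1)).erase v).card :=
              Finset.card_le_card hsub
          _ < (D.filter (fun w => G.degree w = 1)).card :=
              Finset.card_erase_lt_of_mem hvfilt
      have hE := hmin _ (hmemS _ hdom')
      have hkD : key D = D.card * N + (D.filter (fun w => G.degree w = 1)).card := rfl
      have hkE : key D' = D'.card * N + (D'.filter (fun w => G.degree w = 1)).card := rfl
      rw [hkD, hkE, hcard'] at hE
      omega
  -- minimality of cardinality
  have hmincard : ∀ D' : Finset V, (∀ v : V, v ∈ D' ∨ ∃ u ∈ D', G.Adj u v) →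
      D.card ≤ D'.card := by
    intro D' hD'
    have hE := hmin _ (hmemS _ hD')
    have hb := hbound D'
    by_contra hlt
    push_neg at hlt
    have h1 : (D'.card + 1) * N ≤ D.card * N := Nat.mul_le_mul_right _ hlt
    have hmul : (D'.card + 1) * N = D'.card * N + N := by ring
    have hkD : key D = D.card * N + (D.filter (fun v => G.degree v = 1)).card := rfl
    have hkE : key D' = D'.card * N + (D'.filter (fun v => G.degree v = 1)).card := rfl
    rw [hkD, hkE] at hE
    rw [hmul] at h1
    omega
  refine ⟨D, hDdom, hmincard, ?_, hnoleaf⟩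
  -- supports
  intro v ⟨u, hadj, hdeg⟩
  have hnu : G.neighborFinset u = {v} := deg_one_nbr G hadj.symm hdeg
  rcases hDdom u with hu | ⟨x, hx, hxu⟩
  · exact absurd hdeg (hnoleaf u hu)
  · have hxv : x ∈ G.neighborFinset u := by simpa using hxu.symm
    rw [hnu] at hxv
    simp at hxv
    subst hxv
    exact hx
end

section
/- For every forest F (with no isolated vertices), the domination number satisfies γ(F) ≤ (D₂(F) + S(F))/2, where D₂(F) is the number of vertices of degree at least 2 and S(F) is the number of support vertices. -/
open SimpleGraph Finset

/-- Ore-type lemma: if every vertex of `A` has a neighbor in `A`, then there is a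
subset of `A` of size at most `|A|/2` dominating `A`. -/
lemma ore_half {V : Type*} [Fintype V] [DecidableEq V] (G : SimpleGraph V) (A : Finset V)
    (h : ∀ v ∈ A, ∃ w ∈ A, G.Adj v w) :
    ∃ D ⊆ A, (∀ v ∈ A, v ∈ D ∨ ∃ u ∈ D, G.Adj u v) ∧ 2 * D.card ≤ A.card := by
  classical
  set P : Finset V → Prop := fun D => D ⊆ A ∧ ∀ v ∈ A, v ∈ D ∨ ∃ u ∈ D, G.Adj u v with hP
  have hPA : P A := ⟨subset_rfl, fun v hv => Or.inl hv⟩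
  have hex : ∃ n, ∃ D, P D ∧ D.card = n := ⟨A.card, A, hPA, rfl⟩
  obtain ⟨D, hD, hcard⟩ := Nat.find_spec hex
  have hminD : ∀ D', P D' → D.card ≤ D'.card := fun D' hD' => by
    rw [hcard]; exact Nat.find_min' hex ⟨D', hD', rfl⟩
  -- complement dominates
  have hcomp : ∀ v ∈ A, v ∈ A \ D ∨ ∃ u ∈ A \ D, G.Adj u v := by
    intro v hv
    by_cases hvD : v ∈ D
    · by_cases hnb : ∃ u ∈ A \ D, G.Adj u v
      · exact Or.inr hnb
      · exfalso
        push_neg at hnb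
        have hall : ∀ u ∈ A, G.Adj u v → u ∈ D := by
          intro u hu hadj
          by_contra huD
          exact hnb u (Finset.mem_sdiff.2 ⟨hu, huD⟩) hadj
        obtain ⟨w, hwA, hwadj⟩ := h v hv
        have hwD : w ∈ D := hall w hwA hwadj.symm
        have hPe : P (D.erase v) := by
          constructor
          · exact (Finset.erase_subset _ _).trans hD.1
          · intro x hx
            by_cases hxv : x = v
            · subst hxv
              refine Or.inr ⟨w, Finset.mem_erase.2 ⟨fun hwv => G.irrefl (hwv ▸ hwadj), hwD⟩,
                hwadj.symm⟩
            · by_cases hxD : x ∈ D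
              · exact Or.inl (Finset.mem_erase.2 ⟨hxv, hxD⟩)
              · rcases hD.2 x hx with hx' | ⟨u, huD, huadj⟩
                · exact absurd hx' hxD
                · by_cases huv : u = v
                  · subst huv
                    exact absurd (hall x hx huadj.symm) hxD
                  · exact Or.inr ⟨u, Finset.mem_erase.2 ⟨huv, huD⟩, huadj⟩
        have := hminD _ hPe
        have hlt := Finset.card_erase_lt_of_mem hvD
        omega
    · exact Or.inl (Finset.mem_sdiff.2 ⟨hv, hvD⟩)
  by_cases h2 : 2 * D.card ≤ A.card
  · exact ⟨D, hD.1, hD.2, h2⟩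
  · refine ⟨A \ D, Finset.sdiff_subset, hcomp, ?_⟩
    have hsub := Finset.card_le_card hD.1
    rw [Finset.card_sdiff_of_subset hD.1]
    omega

/-- For every forest `F` with no isolated vertices, `γ(F) ≤ (D₂(F) + S(F))/2`. -/
theorem stmt6 {V : Type*} [Fintype V] [DecidableEq V] (G : SimpleGraph V)
    [DecidableRel G.Adj] (hF : G.IsAcyclic) (hmin : ∀ v, 1 ≤ G.degree v) :
    ∃ D : Finset V,
      (∀ v : V, v ∈ D ∨ ∃ u ∈ D, G.Adj u v) ∧
      2 * D.card ≤ (univ.filter (fun v => 2 ≤ G.degree v)).card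
        + (univ.filter (fun v => ∃ u, G.Adj v u ∧ G.degree u = 1)).card := by
  classical
  set D2 : Finset V := univ.filter (fun v => 2 ≤ G.degree v) with hD2
  set S : Finset V := univ.filter (fun v => ∃ u, G.Adj v u ∧ G.degree u = 1) with hS
  have memD2 : ∀ v, v ∈ D2 ↔ 2 ≤ G.degree v := by
    intro v; simp [hD2]
  have memS : ∀ v, v ∈ S ↔ ∃ u, G.Adj v u ∧ G.degree u = 1 := by
    intro v; simp [hS]
  -- T : degree-1 supports (K2 components)
  set T : Finset V := S \ D2 with hT
  have hTnb : ∀ v ∈ T, ∃ w ∈ T, G.Adj v w := by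
    intro v hv
    rw [hT, Finset.mem_sdiff, memS, memD2] at hv
    obtain ⟨⟨u, huadj, hu1⟩, hvd⟩ := hv
    have hv1 : G.degree v = 1 := by have := hmin v; omega
    refine ⟨u, ?_, huadj⟩
    rw [hT, Finset.mem_sdiff, memS, memD2]
    exact ⟨⟨v, huadj.symm, hv1⟩, by omega⟩
  obtain ⟨DT, hDTsub, hDTdom, hDTcard⟩ := ore_half G T hTnb
  -- A : non-support vertices of degree ≥ 2 with a neighbor of same kind
  set A : Finset V := (D2 \ S).filter (fun v => ∃ w, w ∈ D2 \ S ∧ G.Adj v w) with hA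
  have hAnb : ∀ v ∈ A, ∃ w ∈ A, G.Adj v w := by
    intro v hv
    rw [hA, Finset.mem_filter] at hv
    obtain ⟨hv1, w, hw, hadj⟩ := hv
    refine ⟨w, ?_, hadj⟩
    rw [hA, Finset.mem_filter]
    exact ⟨hw, v, hv1, hadj.symm⟩
  obtain ⟨DA, hDAsub, hDAdom, hDAcard⟩ := ore_half G A hAnb
  refine ⟨(D2 ∩ S) ∪ DT ∪ DA, ?_, ?_⟩
  · intro v
    by_cases hv1 : G.degree v = 1
    · -- v is a leaf
      have hpos : 0 < G.degree v := hmin v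
      rw [← SimpleGraph.card_neighborFinset_eq_degree, Finset.card_pos] at hpos
      obtain ⟨u, hu⟩ := hpos
      have huadj : G.Adj v u := (SimpleGraph.mem_neighborFinset _ _ _).1 hu
      by_cases hu2 : 2 ≤ G.degree u
      · refine Or.inr ⟨u, ?_, huadj.symm⟩
        refine Finset.mem_union.2 (Or.inl (Finset.mem_union.2 (Or.inl ?_)))
        exact Finset.mem_inter.2 ⟨(memD2 u).2 hu2, (memS u).2 ⟨v, huadj.symm, hv1⟩⟩
      · -- K2 component
        have hu1 : G.degree u = 1 := by have := hmin u; omega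
        have hvT : v ∈ T := by
          rw [hT, Finset.mem_sdiff, memS, memD2]
          exact ⟨⟨u, huadj, hu1⟩, by omega⟩
        rcases hDTdom v hvT with h | ⟨t, htD, htadj⟩
        · exact Or.inl (Finset.mem_union.2 (Or.inl (Finset.mem_union.2 (Or.inr h))))
        · exact Or.inr ⟨t, Finset.mem_union.2 (Or.inl (Finset.mem_union.2 (Or.inr htD))),
            htadj⟩
    · have hv2 : 2 ≤ G.degree v := by have := hmin v; omega
      by_cases hvS : v ∈ S
      · exact Or.inl (Finset.mem_union.2 (Or.inl (Finset.mem_union.2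
          (Or.inl (Finset.mem_inter.2 ⟨(memD2 v).2 hv2, hvS⟩)))))
      · by_cases hsup : ∃ u, G.Adj v u ∧ u ∈ S
        · -- adjacent to a support; that support has degree ≥ 2
          obtain ⟨u, huadj, huS⟩ := hsup
          obtain ⟨w, hwadj, hw1⟩ := (memS u).1 huS
          have hvw : v ≠ w := fun h => by rw [← h] at hw1; omega
          have hu2 : 2 ≤ G.degree u := by
            rw [← SimpleGraph.card_neighborFinset_eq_degree]
            have : 1 < (G.neighborFinset u).card :=
              Finset.one_lt_card.2 ⟨v, (SimpleGraph.mem_neighborFinset _ _ _).2 huadj.symm,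
                w, (SimpleGraph.mem_neighborFinset _ _ _).2 hwadj, hvw⟩
            omega
          refine Or.inr ⟨u, Finset.mem_union.2 (Or.inl (Finset.mem_union.2 (Or.inl
            (Finset.mem_inter.2 ⟨(memD2 u).2 hu2, huS⟩)))), huadj.symm⟩
        · -- v ∈ A
          push_neg at hsup
          have hpos : 0 < G.degree v := hmin v
          rw [← SimpleGraph.card_neighborFinset_eq_degree, Finset.card_pos] at hpos
          obtain ⟨w, hw⟩ := hpos
          have hwadj : G.Adj v w := (SimpleGraph.mem_neighborFinset _ _ _).1 hw
          have hwS : w ∉ S := fun h => hsup w hwadj h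
          have hw2 : 2 ≤ G.degree w := by
            by_contra h
            have hw1 : G.degree w = 1 := by have := hmin w; omega
            exact hvS ((memS v).2 ⟨w, hwadj, hw1⟩)
          have hvA : v ∈ A := by
            rw [hA, Finset.mem_filter]
            refine ⟨Finset.mem_sdiff.2 ⟨(memD2 v).2 hv2, hvS⟩,
              w, Finset.mem_sdiff.2 ⟨(memD2 w).2 hw2, hwS⟩, hwadj⟩
          rcases hDAdom v hvA with h | ⟨u, huD, huadj⟩
          · exact Or.inl (Finset.mem_union.2 (Or.inr h))
          · exact Or.inr ⟨u, Finset.mem_union.2 (Or.inr huD), huadj⟩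
  · -- cardinality bound
    have h1 : ((D2 ∩ S) ∪ DT ∪ DA).card ≤ (D2 ∩ S).card + DT.card + DA.card :=
      le_trans (Finset.card_union_le _ _)
        (by have := Finset.card_union_le (D2 ∩ S) DT; omega)
    have hAle : A.card ≤ (D2 \ S).card := by
      rw [hA]; exact Finset.card_filter_le _ _
    have e1 : (D2 \ S).card + (D2 ∩ S).card = D2.card :=
      Finset.card_sdiff_add_card_inter _ _
    have e2 : (S \ D2).card + (S ∩ D2).card = S.card :=
      Finset.card_sdiff_add_card_inter _ _
    have e3 : (D2 ∩ S).card = (S ∩ D2).card := by rw [Finset.inter_comm]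
    have hTcard : T.card = (S \ D2).card := by rw [hT]
    omega
end

section
/- For every tree T with at least 2 vertices, γ(T) ≥ (D₂(T) + S(T))/4, where D₂(T) is the number of vertices of degree at least 2 and S(T) is the number of support vertices. -/
open SimpleGraph Finset

/-- A leaf (vertex of degree 1) has a unique neighbor. -/
lemma leafNbrUnique {V : Type*} [Fintype V] [DecidableEq V] {G : SimpleGraph V}
    [DecidableRel G.Adj] {u a b : V} (hu : G.degree u = 1) (ha : G.Adj u a)
    (hb : G.Adj u b) : a = b := by
  have h1 : a ∈ G.neighborFinset u := by simpa using ha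
  have h2 : b ∈ G.neighborFinset u := by simpa using hb
  obtain ⟨c, hc⟩ := Finset.card_eq_one.mp (hu : (G.neighborFinset u).card = 1)
  rw [hc] at h1 h2
  simp only [Finset.mem_singleton] at h1 h2
  rw [h1, h2]

/-- Walks starting in a pendant-edge component stay in it. -/
lemma walkStay {V : Type*} [Fintype V] [DecidableEq V] {G : SimpleGraph V}
    [DecidableRel G.Adj] {a b : V} (hab : G.Adj a b)
    (hda : G.degree a = 1) (hdb : G.degree b = 1) :
    ∀ {u w : V} (_ : G.Walk u w), (u = a ∨ u = b) → (w = a ∨ w = b) := by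
  intro u w p
  induction p with
  | nil => exact id
  | cons h q ih =>
    intro hu
    apply ih
    rcases hu with rfl | rfl
    · right; exact leafNbrUnique hda h hab
    · left; exact leafNbrUnique hdb h hab.symm

/-- Two adjacent leaves in a connected graph force at most 2 vertices. -/
lemma twoLeaves {V : Type*} [Fintype V] [DecidableEq V] {G : SimpleGraph V}
    [DecidableRel G.Adj] {a b : V} (hc : G.Connected) (hab : G.Adj a b)
    (hda : G.degree a = 1) (hdb : G.degree b = 1) : Fintype.card V ≤ 2 := by
  have hsub : (univ : Finset V) ⊆ {a, b} := by
    intro w _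
    obtain ⟨p⟩ := hc.preconnected a w
    rcases walkStay hab hda hdb p (Or.inl rfl) with rfl | rfl <;> simp
  calc Fintype.card V = (univ : Finset V).card := (Finset.card_univ).symm
    _ ≤ ({a, b} : Finset V).card := Finset.card_le_card hsub
    _ ≤ 2 := Finset.card_insert_le _ _ |>.trans (by simp)

/-- The number of support vertices is at most the size of any dominating set,
provided there are at least 3 vertices. -/
lemma supportLeDom {V : Type*} [Fintype V] [DecidableEq V] (G : SimpleGraph V)
    [DecidableRel G.Adj] (hT : G.IsTree) (hn3 : 3 ≤ Fintype.card V)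
    (D : Finset V) (hD : ∀ v : V, v ∈ D ∨ ∃ u ∈ D, G.Adj u v) :
    (univ.filter (fun v => ∃ u, G.Adj v u ∧ G.degree u = 1)).card ≤ D.card := by
  classical
  set Q : V → Prop := fun s => ∃ u, G.Adj s u ∧ G.degree u = 1 ∧ u ∈ D with hQdef
  have hQ : ∀ s ∈ univ.filter (fun v => ∃ u, G.Adj v u ∧ G.degree u = 1),
      s ∉ D → Q s := by
    intro s hs hsD
    obtain ⟨u, hsu, hu1⟩ := (Finset.mem_filter.mp hs).2
    rcases hD u with huD | ⟨w, hwD, hwu⟩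
    · exact ⟨u, hsu, hu1, huD⟩
    · have : w = s := leafNbrUnique hu1 hwu.symm hsu.symm
      exact absurd (this ▸ hwD) hsD
  set f : V → V := fun s => if s ∈ D then s
    else if h : Q s then h.choose else s with hfdef
  have hfD : ∀ s, s ∉ D → Q s →
      G.Adj s (f s) ∧ G.degree (f s) = 1 ∧ f s ∈ D := by
    intro s hsD hq
    have hfs : f s = hq.choose := by
      simp only [hfdef]; rw [if_neg hsD, dif_pos hq]
    rw [hfs]
    exact hq.choose_spec
  apply Finset.card_le_card_of_injOn f
  · intro s hs
    by_cases hsD : s ∈ D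
    · simpa [hfdef, hsD] using hsD
    · exact (hfD s hsD (hQ s hs hsD)).2.2
  · intro s1 hs1 s2 hs2 hf
    by_cases h1 : s1 ∈ D <;> by_cases h2 : s2 ∈ D
    · simpa [hfdef, h1, h2] using hf
    · -- s1 ∈ D, s2 ∉ D
      exfalso
      obtain ⟨ha2, hd2, _⟩ := hfD s2 h2 (hQ s2 hs2 h2)
      have hs1f : f s1 = s1 := by simp [hfdef, h1]
      rw [hs1f] at hf
      have hd1 : G.degree s1 = 1 := hf ▸ hd2
      have ha21 : G.Adj s2 s1 := hf ▸ ha2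
      obtain ⟨u, hsu, hu1⟩ := (Finset.mem_filter.mp hs1).2
      have : u = s2 := leafNbrUnique hd1 hsu ha21.symm
      subst this
      exact absurd (twoLeaves hT.isConnected hsu hd1 hu1) (by omega)
    · -- s2 ∈ D, s1 ∉ D
      exfalso
      obtain ⟨ha1, hd1, _⟩ := hfD s1 h1 (hQ s1 hs1 h1)
      have hs2f : f s2 = s2 := by simp [hfdef, h2]
      rw [hs2f] at hf
      have hd2 : G.degree s2 = 1 := hf ▸ hd1
      have ha12 : G.Adj s1 s2 := hf ▸ ha1
      obtain ⟨u, hsu, hu1⟩ := (Finset.mem_filter.mp hs2).2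
      have : u = s1 := leafNbrUnique hd2 hsu ha12.symm
      subst this
      exact absurd (twoLeaves hT.isConnected hsu hd2 hu1) (by omega)
    · obtain ⟨ha1, hd1, _⟩ := hfD s1 h1 (hQ s1 hs1 h1)
      obtain ⟨ha2, hd2, _⟩ := hfD s2 h2 (hQ s2 hs2 h2)
      rw [hf] at ha1
      exact leafNbrUnique hd2 ha1.symm ha2.symm

/-- For every tree `T` with at least 2 vertices, `γ(T) ≥ (D₂(T) + S(T))/4`. -/
theorem stmt7 {V : Type*} [Fintype V] [DecidableEq V] (G : SimpleGraph V)
    [DecidableRel G.Adj] (hT : G.IsTree) (hn : 2 ≤ Fintype.card V)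
    (D : Finset V) (hD : ∀ v : V, v ∈ D ∨ ∃ u ∈ D, G.Adj u v) :
    (univ.filter (fun v => 2 ≤ G.degree v)).card
      + (univ.filter (fun v => ∃ u, G.Adj v u ∧ G.degree u = 1)).card
      ≤ 4 * D.card := by
  classical
  have hDne : 1 ≤ D.card := by
    have : Nonempty V := Fintype.card_pos_iff.mp (by omega)
    obtain ⟨v⟩ := this
    rcases hD v with hv | ⟨u, hu, _⟩
    · exact Finset.card_pos.mpr ⟨v, hv⟩
    · exact Finset.card_pos.mpr ⟨u, hu⟩
  by_cases hn3 : 3 ≤ Fintype.card V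
  case neg =>
    have hcard2 : Fintype.card V = 2 := by omega
    have hempty : (univ.filter (fun v => 2 ≤ G.degree v)) = ∅ := by
      apply Finset.filter_false_of_mem
      intro v _
      have := G.degree_lt_card_verts v
      omega
    have hS2 : (univ.filter (fun v => ∃ u, G.Adj v u ∧ G.degree u = 1)).card ≤ 2 := by
      calc _ ≤ (univ : Finset V).card := Finset.card_filter_le _ _
        _ = 2 := by rw [Finset.card_univ, hcard2]
    rw [hempty]
    simp only [Finset.card_empty, zero_add]
    omega
  case pos =>
  -- every vertex has degree at least 1
  have hdeg1 : ∀ v : V, 1 ≤ G.degree v := by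
    intro v
    obtain ⟨w, hw⟩ := Fintype.exists_ne_of_one_lt_card (by omega) v
    obtain ⟨p⟩ := hT.isConnected.preconnected v w
    rw [Nat.one_le_iff_ne_zero, ← Nat.pos_iff_ne_zero, G.degree_pos_iff_exists_adj]
    cases p with
    | nil => exact absurd rfl hw
    | cons h q => exact ⟨_, h⟩
  -- splitting counts over D and its complement
  have hsplitcard : ∀ (p : V → Prop) [DecidablePred p],
      (univ.filter p).card = (D.filter p).card + (Dᶜ.filter p).card := by
    intro p _
    rw [← Finset.card_union_of_disjoint
      (Finset.disjoint_filter_filter disjoint_compl_right), ← Finset.filter_union,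
      Finset.union_compl]
  have hsplitdeg : ∀ v : V,
      G.degree v = (D.filter (G.Adj v)).card + (Dᶜ.filter (G.Adj v)).card := by
    intro v
    rw [← hsplitcard]
    simp [degree, neighborFinset_eq_filter]
  -- notation for the four directed-edge counts
  set x : ℕ := ∑ v ∈ Dᶜ, (D.filter (G.Adj v)).card with hxdef
  set cc : ℕ := ∑ v ∈ Dᶜ, (Dᶜ.filter (G.Adj v)).card with hccdef
  set x' : ℕ := ∑ v ∈ D, (Dᶜ.filter (G.Adj v)).card with hx'def
  set dd : ℕ := ∑ v ∈ D, (D.filter (G.Adj v)).card with hdddef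
  have hDcdeg : ∑ v ∈ Dᶜ, G.degree v = x + cc := by
    rw [hxdef, hccdef, ← Finset.sum_add_distrib]
    exact Finset.sum_congr rfl fun v _ => hsplitdeg v
  have hDdeg : ∑ v ∈ D, G.degree v = dd + x' := by
    rw [hdddef, hx'def, ← Finset.sum_add_distrib]
    exact Finset.sum_congr rfl fun v _ => hsplitdeg v
  -- handshake + tree edge count
  have htot : ∑ v, G.degree v + 2 = 2 * Fintype.card V := by
    rw [G.sum_degrees_eq_twice_card_edges, ← hT.card_edgeFinset]
    ring
  have hsum : ∑ v ∈ D, G.degree v + ∑ v ∈ Dᶜ, G.degree v = ∑ v, G.degree v := by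
    rw [← Finset.sum_union disjoint_compl_right, Finset.union_compl]
  have hTotal : dd + x' + (x + cc) + 2 = 2 * Fintype.card V := by
    rw [← hDdeg, ← hDcdeg, hsum, htot]
  -- symmetry of cross edges
  have hsym : x = x' := by
    rw [hxdef, hx'def]
    simp only [Finset.card_filter]
    rw [Finset.sum_comm]
    congr 1; ext u; congr 1; ext v
    simp [G.adj_comm]
  -- domination: each vertex outside D has a neighbor in D
  have hxlb : Dᶜ.card ≤ x := by
    rw [hxdef]
    calc Dᶜ.card = ∑ _v ∈ Dᶜ, 1 := by simp
      _ ≤ ∑ v ∈ Dᶜ, (D.filter (G.Adj v)).card := by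
        apply Finset.sum_le_sum
        intro v hv
        have hvD : v ∉ D := by simpa using hv
        rcases hD v with h | ⟨u, hu, huv⟩
        · exact absurd h hvD
        · exact Finset.card_pos.mpr ⟨u, Finset.mem_filter.mpr ⟨hu, huv.symm⟩⟩
  -- degree-2 vertices outside D
  set a : ℕ := (Dᶜ.filter (fun v => 2 ≤ G.degree v)).card with hadef
  have halb : Dᶜ.card + a ≤ x + cc := by
    rw [← hDcdeg, hadef, Finset.card_filter]
    calc Dᶜ.card + ∑ v ∈ Dᶜ, (if 2 ≤ G.degree v then 1 else 0)
        = ∑ v ∈ Dᶜ, (1 + if 2 ≤ G.degree v then 1 else 0) := by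
          rw [Finset.sum_add_distrib]; simp
      _ ≤ ∑ v ∈ Dᶜ, G.degree v := by
          apply Finset.sum_le_sum
          intro v _
          by_cases h : 2 ≤ G.degree v
          · simp only [if_pos h]; omega
          · simp only [if_neg h]; exact hdeg1 v
  -- split the D₂ count
  have hD2 : (univ.filter (fun v => 2 ≤ G.degree v)).card
      = (D.filter (fun v => 2 ≤ G.degree v)).card + a := hsplitcard _
  have hb : (D.filter (fun v => 2 ≤ G.degree v)).card ≤ D.card :=
    Finset.card_filter_le _ _
  have hS : (univ.filter (fun v => ∃ u, G.Adj v u ∧ G.degree u = 1)).card ≤ D.card :=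
    supportLeDom G hT hn3 D hD
  have hcompl : D.card + Dᶜ.card = Fintype.card V := Finset.card_add_card_compl D
  omega
end

section
/- In every connected graph with at least 3 vertices, there exists a maximum matching in which every support vertex is matched by an edge joining it to one of its leaves. -/
/-!
Among the maximum matchings choose one covering as many leaves as possible. Suppose a support
vertex `v` with leaf `u` were not matched to a leaf. Then `u` is unmatched, since its only
neighbour is `v`. So `v` is matched, or `vu` would augment the matching, and its partner `w` is
not a leaf. Replacing `vw` by `vu` gives a maximum matching covering one more leaf.
-/

open SimpleGraph

namespace SimpleGraph.Subgraph

variable {V : Type*} {G : SimpleGraph V} {M : G.Subgraph} {u v w : V}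

lemma IsMatching.sup_subgraphOfAdj (hM : M.IsMatching) (hu : u ∉ M.verts) (hv : v ∉ M.verts)
    (huv : G.Adj u v) : (M ⊔ G.subgraphOfAdj huv).IsMatching := by
  refine hM.sup (IsMatching.subgraphOfAdj huv) ?_
  rw [hM.support_eq_verts, support_subgraphOfAdj, Set.disjoint_insert_right,
    Set.disjoint_singleton_right]
  exact ⟨hu, hv⟩

lemma edgeSet_sup_subgraphOfAdj (huv : G.Adj u v) :
    (M ⊔ G.subgraphOfAdj huv).edgeSet = insert s(u, v) M.edgeSet := by
  rw [edgeSet_sup, edgeSet_subgraphOfAdj, Set.union_singleton]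

lemma IsMatching.deleteVerts_of_adj (hM : M.IsMatching) (hvw : M.Adj v w) :
    (M.deleteVerts {v, w}).IsMatching := by
  rintro x ⟨hx, hxvw⟩
  obtain ⟨y, hxy, hy⟩ := hM hx
  have hyvw : y ∉ ({v, w} : Set V) := by
    rintro (rfl | rfl)
    · exact hxvw (.inr (hM.eq_of_adj_left hvw hxy.symm).symm)
    · exact hxvw (.inl (hM.eq_of_adj_right hxy hvw))
  refine ⟨y, deleteVerts_adj.mpr ⟨hx, hxvw, M.edge_vert hxy.symm, hyvw, hxy⟩, ?_⟩
  exact fun z hz ↦ hy z (deleteVerts_adj.mp hz).2.2.2.2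

lemma IsMatching.edgeSet_deleteVerts_of_adj (hM : M.IsMatching) (hvw : M.Adj v w) :
    (M.deleteVerts {v, w}).edgeSet = M.edgeSet \ {s(v, w)} := by
  ext e
  induction e using Sym2.ind with
  | _ a b =>
    simp only [Subgraph.mem_edgeSet, deleteVerts_adj, Set.mem_sdiff, Set.mem_singleton_iff,
      Set.mem_insert_iff, Sym2.eq_iff]
    constructor
    · rintro ⟨-, ha, -, -, hab⟩
      exact ⟨hab, by tauto⟩
    · rintro ⟨hab, hne⟩
      refine ⟨M.edge_vert hab, ?_, M.edge_vert hab.symm, ?_, hab⟩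
      · rintro (rfl | rfl)
        · exact hne (.inl ⟨rfl, hM.eq_of_adj_left hab hvw⟩)
        · exact hne (.inr ⟨rfl, hM.eq_of_adj_left hab hvw.symm⟩)
      · rintro (rfl | rfl)
        · exact hne (.inr ⟨hM.eq_of_adj_right hab hvw.symm, rfl⟩)
        · exact hne (.inl ⟨hM.eq_of_adj_right hab hvw, rfl⟩)

-- `ncard` is `0` on infinite sets, so this notion is only meaningful for finite graphs.
def IsMaximumMatching (M : G.Subgraph) : Prop :=
  M.IsMatching ∧ ∀ M' : G.Subgraph, M'.IsMatching → M'.edgeSet.ncard ≤ M.edgeSet.ncard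

section Finite

variable [Finite V]

lemma exists_isMaximumMatching (G : SimpleGraph V) : ∃ M : G.Subgraph, M.IsMaximumMatching := by
  obtain ⟨M, hM, hmax⟩ := Set.exists_max_image {M : G.Subgraph | M.IsMatching}
    (fun M ↦ M.edgeSet.ncard) (Set.toFinite _) ⟨⊥, fun _ hv ↦ hv.elim⟩
  exact ⟨M, hM, hmax⟩

lemma IsMaximumMatching.mem_verts_of_adj (hM : M.IsMaximumMatching) (huv : G.Adj u v)
    (hu : u ∉ M.verts) : v ∈ M.verts := by
  by_contra hv
  have hnew : s(u, v) ∉ M.edgeSet := fun h ↦ hu (M.edge_vert h)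
  have := hM.2 _ (hM.1.sup_subgraphOfAdj hu hv huv)
  rw [edgeSet_sup_subgraphOfAdj, Set.ncard_insert_of_notMem hnew (Set.toFinite _)] at this
  omega

lemma IsMaximumMatching.deleteVerts_sup_subgraphOfAdj (hM : M.IsMaximumMatching)
    (hvw : M.Adj v w) (hvu : G.Adj v u) (hu : u ∉ M.verts) :
    (M.deleteVerts {v, w} ⊔ G.subgraphOfAdj hvu).IsMaximumMatching := by
  have hnew : s(v, u) ∉ (M.deleteVerts {v, w}).edgeSet :=
    fun h ↦ (deleteVerts_adj.mp h).2.1 (.inl rfl)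
  refine ⟨(hM.1.deleteVerts_of_adj hvw).sup_subgraphOfAdj (by simp) (by simp [hu]) hvu,
    fun M' hM' ↦ (hM.2 M' hM').trans (le_of_eq ?_)⟩
  rw [edgeSet_sup_subgraphOfAdj, Set.ncard_insert_of_notMem hnew (Set.toFinite _),
    hM.1.edgeSet_deleteVerts_of_adj hvw,
    Set.ncard_sdiff_singleton_add_one (Subgraph.mem_edgeSet.mpr hvw) (Set.toFinite _)]

end Finite

lemma IsMaximumMatching.exists_adj_degree_eq_one [Fintype V] [DecidableRel G.Adj]
    (hM : M.IsMaximumMatching)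
    (hleaves : ∀ M' : G.Subgraph, M'.IsMaximumMatching →
      (M'.verts ∩ {x | G.degree x = 1}).ncard ≤ (M.verts ∩ {x | G.degree x = 1}).ncard)
    (hvu : G.Adj v u) (hu : G.degree u = 1) :
    ∃ w, G.Adj v w ∧ G.degree w = 1 ∧ M.Adj v w := by
  by_contra! hbad
  have hu_unmatched : u ∉ M.verts := by
    intro hu_matched
    obtain ⟨x, hux, -⟩ := hM.1 hu_matched
    obtain rfl : x = v :=
      (SimpleGraph.degree_eq_one_iff_existsUnique_adj.mp hu).unique (M.adj_sub hux) hvu.symm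
    exact hbad u hvu hu hux.symm
  obtain ⟨w, hvw, -⟩ := hM.1 (hM.mem_verts_of_adj hvu.symm hu_unmatched)
  have hw : G.degree w ≠ 1 := fun hw ↦ hbad w (M.adj_sub hvw) hw hvw
  have hmore : M.verts ∩ {x | G.degree x = 1} ⊂
      (M.deleteVerts {v, w} ⊔ G.subgraphOfAdj hvu).verts ∩ {x | G.degree x = 1} := by
    refine Set.ssubset_iff_of_subset ?_ |>.mpr ⟨u, by simp [hu], fun h ↦ hu_unmatched h.1⟩
    rintro x ⟨hx, hx1 : G.degree x = 1⟩
    have hxw : x ≠ w := by rintro rfl; exact hw hx1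
    refine ⟨?_, hx1⟩
    by_cases hxv : x = v
    · simp [hxv]
    · simp [hx, hxv, hxw]
  exact (hleaves _ (hM.deleteVerts_sup_subgraphOfAdj hvw hvu hu_unmatched)).not_gt
    (Set.ncard_lt_ncard hmore (Set.toFinite _))

end SimpleGraph.Subgraph

theorem stmt8_general {V : Type*} [Fintype V] (G : SimpleGraph V)
    [DecidableRel G.Adj] :
    ∃ M : G.Subgraph, M.IsMatching ∧
      (∀ M' : G.Subgraph, M'.IsMatching → M'.edgeSet.ncard ≤ M.edgeSet.ncard) ∧
      (∀ v : V, (∃ u, G.Adj v u ∧ G.degree u = 1) →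
        ∃ w, G.Adj v w ∧ G.degree w = 1 ∧ M.Adj v w) := by
  obtain ⟨M, hM, hleaves⟩ := Set.exists_max_image {M : G.Subgraph | M.IsMaximumMatching}
    (fun M ↦ (M.verts ∩ {x | G.degree x = 1}).ncard) (Set.toFinite _)
    (Subgraph.exists_isMaximumMatching G)
  exact ⟨M, hM.1, hM.2, fun v ⟨u, hvu, hu⟩ ↦ hM.exists_adj_degree_eq_one hleaves hvu hu⟩

/-- In every connected graph with at least 3 vertices, there is a maximum matching
in which every support vertex is matched by an edge to one of its leaves. -/
theorem stmt8 {V : Type*} [Fintype V] [DecidableEq V] (G : SimpleGraph V)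
    [DecidableRel G.Adj] (hc : G.Connected) (hn : 3 ≤ Fintype.card V) :
    ∃ M : G.Subgraph, M.IsMatching ∧
      (∀ M' : G.Subgraph, M'.IsMatching → M'.edgeSet.ncard ≤ M.edgeSet.ncard) ∧
      (∀ v : V, (∃ u, G.Adj v u ∧ G.degree u = 1) →
        ∃ w, G.Adj v w ∧ G.degree w = 1 ∧ M.Adj v w) :=
  stmt8_general G
end

section
/- For every tree T with at least 2 vertices, the matching number satisfies φ(T) ≤ (D₂(T) + S(T))/2, where D₂(T) is the number of vertices of degree at least 2 and S(T) is the number of support vertices. -/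
/-!
The `2 * |M|` vertices covered by a matching `M` split into non-leaves and leaves. A matched
non-leaf has degree at least 2. A matched leaf is matched to its only neighbour, a support vertex,
and distinct matched leaves have distinct partners, so matched leaves are at most as many as
support vertices.
-/

open SimpleGraph Finset

namespace SimpleGraph.Subgraph.IsMatching

variable {V : Type*} {G : SimpleGraph V} {M : G.Subgraph}

theorem ncard_verts_eq_two_mul_ncard_edgeSet [Finite V] (hM : M.IsMatching) :
    M.verts.ncard = 2 * M.edgeSet.ncard := by
  classical
  have := Fintype.ofFinite V
  rw [isMatching_iff_forall_degree] at hM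
  rw [← M.image_coe_edgeSet_coe,
    Set.ncard_image_of_injective _ (Sym2.map.injective Subtype.coe_injective),
    ← Nat.card_coe_set_eq, ← Nat.card_coe_set_eq, Nat.card_eq_fintype_card,
    Nat.card_eq_fintype_card, card_edgeSet, ← M.coe.sum_degrees_eq_twice_card_edges,
    ← card_univ, card_eq_sum_ones]
  exact sum_congr rfl fun v _ ↦ by rw [M.coe_degree]; convert (hM v v.2).symm

variable [Fintype V] [DecidableRel G.Adj]

theorem two_le_degree_of_mem_verts (hM : M.IsMatching) {v : V} (hv : v ∈ M.verts)
    (hv₁ : G.degree v ≠ 1) : 2 ≤ G.degree v := by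
  obtain ⟨w, hvw, -⟩ := hM hv
  have := G.degree_pos_iff_exists_adj v |>.mpr ⟨w, M.adj_sub hvw⟩
  omega

theorem card_leaves_le_card_support [Fintype M.verts] (hM : M.IsMatching) :
    #{v ∈ M.verts.toFinset | G.degree v = 1} ≤ #{v | ∃ u, G.Adj v u ∧ G.degree u = 1} := by
  refine card_le_card_of_forall_subsingleton (fun v u ↦ M.Adj v u) ?_ ?_
  · intro v hv
    simp only [mem_filter, Set.mem_toFinset] at hv
    obtain ⟨u, hvu, -⟩ := hM hv.1
    exact ⟨u, by simpa using ⟨v, (M.adj_sub hvu).symm, hv.2⟩, hvu⟩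
  · intro u _ v hv w hw
    exact hM.eq_of_adj_right hv.2 hw.2

end SimpleGraph.Subgraph.IsMatching

theorem stmt9_general {V : Type*} [Fintype V] (G : SimpleGraph V)
    [DecidableRel G.Adj] (M : G.Subgraph) (hM : M.IsMatching) :
    2 * M.edgeSet.ncard ≤ (univ.filter (fun v => 2 ≤ G.degree v)).card
      + (univ.filter (fun v => ∃ u, G.Adj v u ∧ G.degree u = 1)).card := by
  classical
  have hnonleaves : #{v ∈ M.verts.toFinset | ¬G.degree v = 1} ≤ #{v | 2 ≤ G.degree v} :=
    card_le_card fun v hv ↦ by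
      simp only [mem_filter, Set.mem_toFinset] at hv
      simpa using hM.two_le_degree_of_mem_verts hv.1 hv.2
  have hleaves := hM.card_leaves_le_card_support
  have hsplit := card_filter_add_card_filter_not (s := M.verts.toFinset) (G.degree · = 1)
  rw [← hM.ncard_verts_eq_two_mul_ncard_edgeSet, Set.ncard_eq_toFinset_card']
  omega

/-- For every tree `T` with at least 2 vertices, `φ(T) ≤ (D₂(T) + S(T))/2`. -/
theorem stmt9 {V : Type*} [Fintype V] [DecidableEq V] (G : SimpleGraph V)
    [DecidableRel G.Adj] (hT : G.IsTree) (hn : 2 ≤ Fintype.card V)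
    (M : G.Subgraph) (hM : M.IsMatching) :
    2 * M.edgeSet.ncard ≤ (univ.filter (fun v => 2 ≤ G.degree v)).card
      + (univ.filter (fun v => ∃ u, G.Adj v u ∧ G.degree u = 1)).card :=
  stmt9_general G M hM
end

section
/- Let π be a uniformly random permutation of the vertex set of a graph, and let x, y be non-adjacent vertices with |N(x)∩N(y)| = k, |N(x)\N(y)| = l, |N(y)\N(x)| = r, and N(x)∪N(y)∪{x,y} equal to the whole vertex set. Then Pr[y precedes all of N(y) in π | x precedes all of N(x) in π] = (l + r + 2k + 2)/((r + k + 1)(l + k + r + 2)). -/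
open SimpleGraph Finset

lemma natcard_filter {α : Type*} [Fintype α] (p : α → Prop) [DecidablePred p] :
    Nat.card {x // p x} = (univ.filter p).card := by
  rw [Nat.card_eq_fintype_card, Fintype.card_subtype]

lemma keycard {V : Type*} [Fintype V] [DecidableEq V] {n : ℕ}
    (Q : (V ≃ Fin n) → Prop) (A : Finset V) (a : V) (ha : a ∈ A)
    (hQ : ∀ (π : V ≃ Fin n) (c d : V), c ∈ A → d ∈ A → Q π →
      Q (π.trans (Equiv.swap (π c) (π d)))) :
    A.card * Nat.card {π : V ≃ Fin n // Q π ∧ ∀ u ∈ A, u ≠ a → π a < π u}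
      = Nat.card {π : V ≃ Fin n // Q π} := by
  classical
  set S : V → Finset (V ≃ Fin n) :=
    fun c => univ.filter (fun π => Q π ∧ ∀ u ∈ A, u ≠ c → π c < π u) with hS
  have hmap : ∀ (c d : V), c ∈ A → d ∈ A → ∀ π ∈ S c,
      π.trans (Equiv.swap (π c) (π d)) ∈ S d := by
    intro c d hc hd π hπ
    simp only [hS, mem_filter, mem_univ, true_and] at hπ ⊢
    obtain ⟨hQπ, hmin⟩ := hπ
    refine ⟨hQ π c d hc hd hQπ, ?_⟩
    intro u hu hud
    simp only [Equiv.trans_apply, Equiv.swap_apply_right]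
    by_cases huc : u = c
    · subst huc
      rw [Equiv.swap_apply_left]
      exact hmin d hd (Ne.symm hud)
    · rw [Equiv.swap_apply_of_ne_of_ne (fun h => huc (π.injective h))
        (fun h => hud (π.injective h))]
      exact hmin u hu huc
  have hinv : ∀ (c d : V) (π : V ≃ Fin n),
      ((π.trans (Equiv.swap (π c) (π d))).trans
        (Equiv.swap ((π.trans (Equiv.swap (π c) (π d))) d)
          ((π.trans (Equiv.swap (π c) (π d))) c))) = π := by
    intro c d π
    refine Equiv.ext fun v => ?_
    simp only [Equiv.trans_apply, Equiv.swap_apply_left, Equiv.swap_apply_right]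
    rw [Equiv.swap_comm]
    exact Equiv.swap_apply_self _ _ _
  have hcards : ∀ c ∈ A, (S c).card = (S a).card := by
    intro c hc
    refine Finset.card_bij' (fun π _ => π.trans (Equiv.swap (π c) (π a)))
      (fun σ _ => σ.trans (Equiv.swap (σ a) (σ c))) (fun π hπ => hmap c a hc ha π hπ)
      (fun σ hσ => hmap a c ha hc σ hσ) ?_ ?_
    · intro π hπ
      have := hinv c a π
      simpa only [Equiv.trans_apply, Equiv.swap_apply_left, Equiv.swap_apply_right] using this
    · intro σ hσ
      have := hinv a c σ
      simpa only [Equiv.trans_apply, Equiv.swap_apply_left, Equiv.swap_apply_right] using this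
  have hpart : univ.filter Q = A.biUnion S := by
    ext π
    simp only [mem_filter, mem_univ, true_and, mem_biUnion]
    constructor
    · intro hQπ
      obtain ⟨c, hc, hmin⟩ := Finset.exists_min_image A π ⟨a, ha⟩
      exact ⟨c, hc, by
        simp only [hS, mem_filter, mem_univ, true_and]
        exact ⟨hQπ, fun u hu huc =>
          lt_of_le_of_ne (hmin u hu) (fun h => huc (π.injective h).symm)⟩⟩
    · rintro ⟨c, hc, hπ⟩
      simp only [hS, mem_filter, mem_univ, true_and] at hπ
      exact hπ.1
  have hdisj : ∀ c ∈ A, ∀ d ∈ A, c ≠ d → Disjoint (S c) (S d) := by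
    intro c hc d hd hcd
    rw [Finset.disjoint_left]
    intro π hπc hπd
    simp only [hS, mem_filter, mem_univ, true_and] at hπc hπd
    exact absurd (hπc.2 d hd (Ne.symm hcd)) (not_lt.2 (hπd.2 c hc hcd).le)
  have := Finset.card_biUnion hdisj
  rw [natcard_filter, natcard_filter]
  calc A.card * (univ.filter fun π => Q π ∧ ∀ u ∈ A, u ≠ a → π a < π u).card
      = ∑ c ∈ A, (S c).card := by
        rw [Finset.sum_congr rfl hcards, Finset.sum_const, smul_eq_mul]
    _ = (A.biUnion S).card := (Finset.card_biUnion hdisj).symm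
    _ = (univ.filter Q).card := by rw [hpart]


/-- Conditional probability, over a uniformly random permutation, that `y` precedes
all its neighbors given that `x` precedes all its neighbors, for non-adjacent `x, y`
with `k` common neighbors, `l` private neighbors of `x` and `r` private neighbors
of `y`, where the whole vertex set is `{x, y} ∪ N(x) ∪ N(y)`. -/
theorem stmt15 {V : Type*} [Fintype V] [DecidableEq V] (G : SimpleGraph V)
    [DecidableRel G.Adj] (x y : V) (k l r : ℕ) (hxy : x ≠ y) (hadj : ¬ G.Adj x y)
    (hk : (G.neighborFinset x ∩ G.neighborFinset y).card = k)
    (hl : (G.neighborFinset x \ G.neighborFinset y).card = l)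
    (hr : (G.neighborFinset y \ G.neighborFinset x).card = r)
    (hall : (univ : Finset V) = {x, y} ∪ G.neighborFinset x ∪ G.neighborFinset y) :
    (Nat.card {π : V ≃ Fin (Fintype.card V) //
        (∀ u ∈ G.neighborFinset x, π x < π u) ∧ (∀ u ∈ G.neighborFinset y, π y < π u)} : ℚ)
      / (Nat.card {π : V ≃ Fin (Fintype.card V) // ∀ u ∈ G.neighborFinset x, π x < π u} : ℚ)
    = ((l : ℚ) + r + 2 * k + 2) / (((r : ℚ) + k + 1) * ((l : ℚ) + k + r + 2)) := by
  classical
  set n := Fintype.card V with hn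
  set NX := G.neighborFinset x with hNX
  set NY := G.neighborFinset y with hNY
  -- basic membership facts
  have hxNX : x ∉ NX := SimpleGraph.notMem_neighborFinset_self G x
  have hyNY : y ∉ NY := SimpleGraph.notMem_neighborFinset_self G y
  have hxNY : x ∉ NY := by
    simp only [hNY, SimpleGraph.mem_neighborFinset]
    exact fun h => hadj h.symm
  have hyNX : y ∉ NX := by
    simp only [hNX, SimpleGraph.mem_neighborFinset]
    exact hadj
  -- cardinalities
  have hcardNX : NX.card = l + k := by
    rw [← hl, ← hk]; exact (Finset.card_sdiff_add_card_inter _ _).symm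
  have hcardNY : NY.card = r + k := by
    rw [← hr, ← hk, Finset.inter_comm]
    exact (Finset.card_sdiff_add_card_inter _ _).symm
  have hcardU : (NX ∪ NY).card = l + k + r := by
    have h := Finset.card_union_add_card_inter NX NY
    rw [hcardNX, hcardNY, hk] at h
    omega
  have hdisj2 : Disjoint ({x, y} : Finset V) (NX ∪ NY) := by
    rw [Finset.disjoint_left]
    intro z hz hz'
    simp only [Finset.mem_insert, Finset.mem_singleton] at hz
    rcases hz with rfl | rfl
    · rcases Finset.mem_union.1 hz' with h | h
      exacts [hxNX h, hxNY h]
    · rcases Finset.mem_union.1 hz' with h | h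
      exacts [hyNX h, hyNY h]
  have hnval : n = l + k + r + 2 := by
    have : (univ : Finset V).card = ({x, y} ∪ (NX ∪ NY) : Finset V).card := by
      rw [← Finset.union_assoc, ← hall]
    rw [Finset.card_univ, Finset.card_union_of_disjoint hdisj2, hcardU] at this
    have h2 : ({x, y} : Finset V).card = 2 := by
      rw [Finset.card_insert_of_notMem (by simpa using hxy), Finset.card_singleton]
    rw [h2] at this
    omega
  -- predicates
  set QX : (V ≃ Fin n) → Prop := fun π => ∀ u : V, u ≠ x → π x < π u with hQX
  set QY : (V ≃ Fin n) → Prop := fun π => ∀ u : V, u ≠ y → π y < π u with hQY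
  -- invariance lemma
  have hinvQ : ∀ (z : V) (A : Finset V), z ∉ A →
      ∀ (π : V ≃ Fin n) (c d : V), c ∈ A → d ∈ A → (∀ u : V, u ≠ z → π z < π u) →
        (∀ u : V, u ≠ z → (π.trans (Equiv.swap (π c) (π d))) z
            < (π.trans (Equiv.swap (π c) (π d))) u) := by
    intro z A hzA π c d hc hd hmin u huz
    have hcz : c ≠ z := fun h => hzA (h ▸ hc)
    have hdz : d ≠ z := fun h => hzA (h ▸ hd)
    simp only [Equiv.trans_apply]
    rw [Equiv.swap_apply_of_ne_of_ne (fun h => hcz (π.injective h).symm)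
      (fun h => hdz (π.injective h).symm)]
    rcases eq_or_ne u c with rfl | huc
    · rw [Equiv.swap_apply_left]; exact hmin d hdz
    rcases eq_or_ne u d with rfl | hud
    · rw [Equiv.swap_apply_right]; exact hmin c hcz
    · rw [Equiv.swap_apply_of_ne_of_ne (fun h => huc (π.injective h))
        (fun h => hud (π.injective h))]
      exact hmin u huz
  -- counts
  -- counts
  set M := Nat.card (V ≃ Fin n) with hM
  have hMpos : 0 < M := by
    have : Nonempty (V ≃ Fin n) := ⟨Fintype.equivFin V⟩
    rw [hM]; exact Nat.card_pos
  have hMeq : Nat.card {π : V ≃ Fin n // (fun _ => True) π} = M :=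
    Nat.card_congr (Equiv.subtypeUnivEquiv fun _ => trivial)
  set cPx := Nat.card {π : V ≃ Fin n // ∀ u ∈ NX, π x < π u} with hcPx
  set cJ := Nat.card {π : V ≃ Fin n //
      (∀ u ∈ NX, π x < π u) ∧ (∀ u ∈ NY, π y < π u)} with hcJ
  set c0x := Nat.card {π : V ≃ Fin n // QX π} with hc0x
  set c0y := Nat.card {π : V ≃ Fin n // QY π} with hc0y
  set cJx := Nat.card {π : V ≃ Fin n // QX π ∧ ∀ u ∈ NY, π y < π u} with hcJx
  set cJy := Nat.card {π : V ≃ Fin n // QY π ∧ ∀ u ∈ NX, π x < π u} with hcJy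
  -- Equation 1 : (l+k+1) * cPx = M
  have e1 : (l + k + 1) * cPx = M := by
    have h := keycard (V := V) (n := n) (fun _ => True) (insert x NX) x
      (Finset.mem_insert_self x NX) (fun _ _ _ _ _ _ => trivial)
    rw [Finset.card_insert_of_notMem hxNX, hcardNX, hMeq] at h
    have hce : Nat.card {π : V ≃ Fin n //
        (fun _ => True) π ∧ ∀ u ∈ insert x NX, u ≠ x → π x < π u} = cPx := by
      refine Nat.card_congr (Equiv.subtypeEquivRight fun π => ?_)
      constructor
      · intro h u hu
        exact h.2 u (Finset.mem_insert_of_mem hu) (fun he => hxNX (he ▸ hu))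
      · intro h
        refine ⟨trivial, fun u hu hux => ?_⟩
        rcases Finset.mem_insert.1 hu with rfl | hu'
        · exact absurd rfl hux
        · exact h u hu'
    rw [hce] at h
    exact h
  have cardUniv : (univ : Finset V).card = n := Finset.card_univ
  -- Equation 2 : n * c0x = M, n * c0y = M
  have e2 : n * c0x = M := by
    have h := keycard (V := V) (n := n) (fun _ => True) univ x (Finset.mem_univ x)
      (fun _ _ _ _ _ _ => trivial)
    rw [cardUniv, hMeq] at h
    have hce : Nat.card {π : V ≃ Fin n //
        (fun _ => True) π ∧ ∀ u ∈ (univ : Finset V), u ≠ x → π x < π u} = c0x := by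
      refine Nat.card_congr (Equiv.subtypeEquivRight fun π => ?_)
      constructor
      · intro h u hu; exact h.2 u (Finset.mem_univ u) hu
      · intro h; exact ⟨trivial, fun u _ hu => h u hu⟩
    rw [hce] at h
    exact h
  have e2' : n * c0y = M := by
    have h := keycard (V := V) (n := n) (fun _ => True) univ y (Finset.mem_univ y)
      (fun _ _ _ _ _ _ => trivial)
    rw [cardUniv, hMeq] at h
    have hce : Nat.card {π : V ≃ Fin n //
        (fun _ => True) π ∧ ∀ u ∈ (univ : Finset V), u ≠ y → π y < π u} = c0y := by
      refine Nat.card_congr (Equiv.subtypeEquivRight fun π => ?_)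
      constructor
      · intro h u hu; exact h.2 u (Finset.mem_univ u) hu
      · intro h; exact ⟨trivial, fun u _ hu => h u hu⟩
    rw [hce] at h
    exact h
  -- Equation 3 : (r+k+1) * cJx = c0x
  have e3 : (r + k + 1) * cJx = c0x := by
    have hxB : x ∉ insert y NY := by
      simp only [Finset.mem_insert]
      rintro (rfl | h)
      exacts [hxy rfl, hxNY h]
    have h := keycard (V := V) (n := n) QX (insert y NY) y
      (Finset.mem_insert_self y NY)
      (fun π c d hc hd hq => hinvQ x (insert y NY) hxB π c d hc hd hq)
    rw [Finset.card_insert_of_notMem hyNY, hcardNY] at h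
    have hce : Nat.card {π : V ≃ Fin n //
        QX π ∧ ∀ u ∈ insert y NY, u ≠ y → π y < π u} = cJx := by
      refine Nat.card_congr (Equiv.subtypeEquivRight fun π => ?_)
      constructor
      · rintro ⟨hq, h⟩
        exact ⟨hq, fun u hu => h u (Finset.mem_insert_of_mem hu)
          (fun he => hyNY (he ▸ hu))⟩
      · rintro ⟨hq, h⟩
        refine ⟨hq, fun u hu huy => ?_⟩
        rcases Finset.mem_insert.1 hu with rfl | hu'
        · exact absurd rfl huy
        · exact h u hu'
    rw [hce] at h
    exact h
  -- Equation 4 : (l+k+1) * cJy = c0y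
  have e4 : (l + k + 1) * cJy = c0y := by
    have hyA : y ∉ insert x NX := by
      simp only [Finset.mem_insert]
      rintro (rfl | h)
      exacts [hxy rfl, hyNX h]
    have h := keycard (V := V) (n := n) QY (insert x NX) x
      (Finset.mem_insert_self x NX)
      (fun π c d hc hd hq => hinvQ y (insert x NX) hyA π c d hc hd hq)
    rw [Finset.card_insert_of_notMem hxNX, hcardNX] at h
    have hce : Nat.card {π : V ≃ Fin n //
        QY π ∧ ∀ u ∈ insert x NX, u ≠ x → π x < π u} = cJy := by
      refine Nat.card_congr (Equiv.subtypeEquivRight fun π => ?_)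
      constructor
      · rintro ⟨hq, h⟩
        exact ⟨hq, fun u hu => h u (Finset.mem_insert_of_mem hu)
          (fun he => hxNX (he ▸ hu))⟩
      · rintro ⟨hq, h⟩
        refine ⟨hq, fun u hu hux => ?_⟩
        rcases Finset.mem_insert.1 hu with rfl | hu'
        · exact absurd rfl hux
        · exact h u hu'
    rw [hce] at h
    exact h
  -- Equation 5 : cJ = cJx + cJy
  have e5 : cJ = cJx + cJy := by
    rw [hcJ, hcJx, hcJy, natcard_filter, natcard_filter, natcard_filter]
    have hiff : ∀ π : V ≃ Fin n,
        ((∀ u ∈ NX, π x < π u) ∧ (∀ u ∈ NY, π y < π u)) ↔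
          ((QX π ∧ ∀ u ∈ NY, π y < π u) ∨ (QY π ∧ ∀ u ∈ NX, π x < π u)) := by
      intro π
      constructor
      · rintro ⟨hx, hy⟩
        obtain ⟨z, _, hzmin⟩ := Finset.exists_min_image univ π ⟨x, Finset.mem_univ x⟩
        have hz : z ∈ ({x, y} ∪ NX ∪ NY : Finset V) := by
          rw [← hall]; exact Finset.mem_univ _
        have hstrict : ∀ u : V, u ≠ z → π z < π u := fun u hu =>
          lt_of_le_of_ne (hzmin u (Finset.mem_univ u))
            (fun h => hu (π.injective h).symm)
        simp only [Finset.mem_union, Finset.mem_insert, Finset.mem_singleton] at hz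
        rcases hz with (hz | hz) | hz
        · rcases hz with rfl | rfl
          · exact Or.inl ⟨fun u hu => hstrict u hu, hy⟩
          · exact Or.inr ⟨fun u hu => hstrict u hu, hx⟩
        · exact absurd (hx z hz) (not_lt.2 (hzmin x (Finset.mem_univ x)))
        · exact absurd (hy z hz) (not_lt.2 (hzmin y (Finset.mem_univ y)))
      · rintro (⟨hq, h⟩ | ⟨hq, h⟩)
        · exact ⟨fun u hu => hq u (fun he => hxNX (he ▸ hu)), h⟩
        · exact ⟨h, fun u hu => hq u (fun he => hyNY (he ▸ hu))⟩
    rw [Finset.filter_congr (fun π _ => hiff π), Finset.filter_or]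
    apply Finset.card_union_of_disjoint
    rw [Finset.disjoint_left]
    intro π hπ1 hπ2
    simp only [Finset.mem_filter] at hπ1 hπ2
    exact absurd (hπ1.2.1 y (Ne.symm hxy)) (not_lt.2 (hπ2.2.1 x hxy).le)
  -- final arithmetic
  rw [hnval] at e2 e2'
  have hcPxpos : 0 < cPx := by
    rcases Nat.eq_zero_or_pos cPx with h | h
    · rw [h, mul_zero] at e1; omega
    · exact h
  have q1 : ((l : ℚ) + k + 1) * cPx = M := by exact_mod_cast e1
  have q2 : ((l : ℚ) + k + r + 2) * c0x = M := by exact_mod_cast e2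
  have q2' : ((l : ℚ) + k + r + 2) * c0y = M := by exact_mod_cast e2'
  have q3 : ((r : ℚ) + k + 1) * cJx = c0x := by exact_mod_cast e3
  have q4 : ((l : ℚ) + k + 1) * cJy = c0y := by exact_mod_cast e4
  have q5 : (cJ : ℚ) = cJx + cJy := by exact_mod_cast e5
  have hPx0 : (cPx : ℚ) ≠ 0 := by exact_mod_cast hcPxpos.ne'
  have ha0 : ((l : ℚ) + k + 1) ≠ 0 := by positivity
  rw [div_eq_div_iff hPx0 (by positivity)]
  apply mul_left_cancel₀ ha0
  linear_combination (((l : ℚ) + k + 1) * ((r : ℚ) + k + 1) * ((l : ℚ) + k + r + 2)) * q5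
    + (((l : ℚ) + k + 1) * ((l : ℚ) + k + r + 2)) * q3
    + (((r : ℚ) + k + 1) * ((l : ℚ) + k + r + 2)) * q4
    + ((l : ℚ) + k + 1) * q2 + ((r : ℚ) + k + 1) * q2'
    - (((l : ℚ) + k + 1) + ((r : ℚ) + k + 1)) * q1
end

section
/- With the setup of the previous statement (x, y non-adjacent, sharing k common neighbors, and a uniformly random permutation), the events 'x precedes all of N(x)' and 'y precedes all of N(y)' are independent if and only if k = 0, and are positively correlated if k > 0. -/
open SimpleGraph Finset

/-!
Read `π v < π u` as "`v` comes before `u`". For any event `Q` invariant under transpositions of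
`insert v T`, the permutations `π ∘ (v w)` with `w ∈ insert v T`, `Q π`, and `v` first in
`insert v T` under `π` enumerate `Q` exactly once each, so `Pr[v precedes T | Q] = 1 / (|T| + 1)`.

Since every vertex lies in `{x, y} ∪ N(x) ∪ N(y)`, both `x` and `y` precede their neighbourhoods
exactly when the earlier of the two comes first overall and the other precedes its neighbourhood.
"`x` comes first" is invariant under transpositions avoiding `x`, hence
`Pr[A ∧ B] = (1 / n) (1 / (deg y + 1) + 1 / (deg x + 1))`, and as `n + k = deg x + deg y + 2`
this is `Pr[A] Pr[B] (1 + k / n)`.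
-/

section PrecedesAll

variable {W α : Type*} [LinearOrder α]

def PrecedesAll (π : W ≃ α) (v : W) (T : Finset W) : Prop :=
  ∀ u ∈ T, π v < π u

theorem PrecedesAll.mono {π : W ≃ α} {v : W} {T T' : Finset W} (h : PrecedesAll π v T)
    (hT : T' ⊆ T) : PrecedesAll π v T' :=
  fun u hu => h u (hT hu)

variable [DecidableEq W]

theorem precedesAll_iff_forall_insert_le {π : W ≃ α} {v : W} {T : Finset W} (hv : v ∉ T) :
    PrecedesAll π v T ↔ ∀ u ∈ insert v T, π v ≤ π u := by
  refine ⟨fun h u hu => ?_, fun h u hu => ?_⟩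
  · rcases mem_insert.1 hu with rfl | hu
    exacts [le_rfl, (h u hu).le]
  · exact (h u (mem_insert_of_mem hu)).lt_of_ne
      (π.injective.ne (ne_of_mem_of_not_mem hu hv).symm)

theorem forall_swap_trans_le {π : W ≃ α} {S : Finset W} {v w : W} (hv : v ∈ S) (hw : w ∈ S)
    (h : ∀ u ∈ S, π v ≤ π u) :
    ∀ u ∈ S, (Equiv.swap v w).trans π w ≤ (Equiv.swap v w).trans π u := by
  intro u hu
  rw [Equiv.trans_apply, Equiv.trans_apply, Equiv.swap_apply_right]
  apply h
  rw [Equiv.swap_apply_def]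
  split_ifs <;> assumption

/-- `π ∘ (v w)` attains its minimum on `insert v T` at `w`, which recovers `w` and then `π`. -/
theorem natCard_and_precedesAll_mul (Q : (W ≃ α) → Prop) {v : W} {T : Finset W} (hv : v ∉ T)
    (hQ : ∀ w ∈ insert v T, ∀ π, Q π → Q ((Equiv.swap v w).trans π)) :
    Nat.card {π // Q π ∧ PrecedesAll π v T} * (#T + 1) = Nat.card {π // Q π} := by
  set S := insert v T
  let Φ : {π // Q π ∧ PrecedesAll π v T} × S → {π // Q π} :=
    fun p => ⟨(Equiv.swap v p.2).trans p.1, hQ _ p.2.2 _ p.1.2.1⟩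
  have hmin (p : {π // Q π ∧ PrecedesAll π v T} × S) : ∀ u ∈ S, (Φ p).1 p.2 ≤ (Φ p).1 u :=
    forall_swap_trans_le (mem_insert_self v T) p.2.2
      ((precedesAll_iff_forall_insert_le hv).1 p.1.2.2)
  have hΦ : Function.Bijective Φ := by
    constructor
    · rintro ⟨π, w, hw⟩ ⟨π', w', hw'⟩ h
      have hσ : (Φ (π, ⟨w, hw⟩)).1 = (Φ (π', ⟨w', hw'⟩)).1 := congrArg Subtype.val h
      have hww' : w = w' := (Φ (π, ⟨w, hw⟩)).1.injective <| le_antisymm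
        (hmin (π, ⟨w, hw⟩) w' hw') (hσ ▸ hmin (π', ⟨w', hw'⟩) w hw)
      subst hww'
      refine Prod.ext (Subtype.ext (Equiv.ext fun u => ?_)) rfl
      simpa [Φ] using Equiv.congr_fun hσ (Equiv.swap v w u)
    · rintro ⟨σ, hσ⟩
      obtain ⟨w, hw, hσw⟩ := S.exists_min_image σ ⟨v, mem_insert_self v T⟩
      refine ⟨⟨⟨(Equiv.swap v w).trans σ, hQ w hw σ hσ, ?_⟩, ⟨w, hw⟩⟩, ?_⟩
      · rw [precedesAll_iff_forall_insert_le hv, Equiv.swap_comm]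
        exact forall_swap_trans_le hw (mem_insert_self v T) hσw
      · ext u
        simp [Φ]
  rw [← Nat.card_congr (Equiv.ofBijective Φ hΦ), Nat.card_prod, Nat.card_eq_fintype_card (α := S),
    Fintype.card_coe, card_insert_of_notMem hv]

theorem natCard_precedesAll_mul {v : W} {T : Finset W} (hv : v ∉ T) :
    Nat.card {π : W ≃ α // PrecedesAll π v T} * (#T + 1) = Nat.card (W ≃ α) := by
  simpa using natCard_and_precedesAll_mul (fun _ => True) hv (fun _ _ _ _ => trivial)

variable [Fintype W]

theorem PrecedesAll.perm_trans {π : W ≃ α} {a : W} (h : PrecedesAll π a (univ.erase a))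
    {τ : Equiv.Perm W} (hτ : τ a = a) : PrecedesAll (τ.trans π) a (univ.erase a) := by
  intro u hu
  rw [Equiv.trans_apply, Equiv.trans_apply, hτ]
  exact h _ (mem_erase.2
    ⟨fun h => ne_of_mem_erase hu (τ.injective (h.trans hτ.symm)), mem_univ _⟩)

theorem natCard_precedesAll_erase_and_mul {x y : W} {T : Finset W} (hy : y ∉ T)
    (hx : x ∉ insert y T) :
    Nat.card {π : W ≃ α // PrecedesAll π x (univ.erase x) ∧ PrecedesAll π y T} * (#T + 1)
      * Fintype.card W = Nat.card (W ≃ α) := by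
  have hxy : x ≠ y := fun h => hx (h ▸ mem_insert_self x T)
  rw [natCard_and_precedesAll_mul _ hy fun w hw π h =>
      h.perm_trans (Equiv.swap_apply_of_ne_of_ne hxy (ne_of_mem_of_not_mem hw hx).symm),
    ← card_univ, ← card_erase_add_one (mem_univ x)]
  exact natCard_precedesAll_mul (notMem_erase x univ)

end PrecedesAll

section Graph

variable {V α : Type*} [Fintype V] [DecidableEq V] [LinearOrder α] {G : SimpleGraph V}
  [DecidableRel G.Adj] {x y : V}

theorem card_add_card_inter_neighborFinset (hxy : x ≠ y) (hadj : ¬ G.Adj x y)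
    (hall : univ = {x, y} ∪ G.neighborFinset x ∪ G.neighborFinset y) :
    Fintype.card V + #(G.neighborFinset x ∩ G.neighborFinset y)
      = #(G.neighborFinset x) + #(G.neighborFinset y) + 2 := by
  have hyx : ¬ G.Adj y x := fun h => hadj h.symm
  have hdisj : Disjoint {x, y} (G.neighborFinset x ∪ G.neighborFinset y) := by
    simp [Finset.disjoint_left, hadj, hyx]
  rw [← card_univ, hall, union_assoc, card_union_of_disjoint hdisj, card_pair hxy, add_assoc,
    card_union_add_card_inter, add_comm]

theorem precedesAll_erase_of_lt (hall : univ = {x, y} ∪ G.neighborFinset x ∪ G.neighborFinset y)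
    {π : V ≃ α} (hx : PrecedesAll π x (G.neighborFinset x))
    (hy : PrecedesAll π y (G.neighborFinset y)) (hlt : π x < π y) :
    PrecedesAll π x (univ.erase x) := by
  intro u hu
  have hu' : u ∈ {x, y} ∪ G.neighborFinset x ∪ G.neighborFinset y := hall ▸ mem_univ u
  simp only [mem_union, mem_insert, mem_singleton] at hu'
  rcases hu' with ((rfl | rfl) | hux) | huy
  · exact absurd rfl (ne_of_mem_erase hu)
  · exact hlt
  · exact hx u hux
  · exact hlt.trans (hy u huy)

theorem precedesAll_and_iff (hxy : x ≠ y)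
    (hall : univ = {x, y} ∪ G.neighborFinset x ∪ G.neighborFinset y) (π : V ≃ α) :
    PrecedesAll π x (G.neighborFinset x) ∧ PrecedesAll π y (G.neighborFinset y) ↔
      PrecedesAll π x (univ.erase x) ∧ PrecedesAll π y (G.neighborFinset y) ∨
        PrecedesAll π y (univ.erase y) ∧ PrecedesAll π x (G.neighborFinset x) := by
  have hall' : univ = {y, x} ∪ G.neighborFinset y ∪ G.neighborFinset x := by
    rw [hall, union_right_comm, pair_comm]
  have hsub (v : V) : G.neighborFinset v ⊆ univ.erase v := by simp [subset_erase]
  constructor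
  · rintro ⟨hx, hy⟩
    rcases lt_or_gt_of_ne (π.injective.ne hxy) with hlt | hlt
    · exact .inl ⟨precedesAll_erase_of_lt hall hx hy hlt, hy⟩
    · exact .inr ⟨precedesAll_erase_of_lt hall' hy hx hlt, hx⟩
  · rintro (⟨hx, hy⟩ | ⟨hy, hx⟩)
    exacts [⟨hx.mono (hsub x), hy⟩, ⟨hx, hy.mono (hsub y)⟩]

theorem natCard_precedesAll_and_eq_add (hxy : x ≠ y)
    (hall : univ = {x, y} ∪ G.neighborFinset x ∪ G.neighborFinset y) :
    Nat.card {π : V ≃ α //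
        PrecedesAll π x (G.neighborFinset x) ∧ PrecedesAll π y (G.neighborFinset y)}
      = Nat.card {π : V ≃ α //
          PrecedesAll π x (univ.erase x) ∧ PrecedesAll π y (G.neighborFinset y)}
        + Nat.card {π : V ≃ α //
          PrecedesAll π y (univ.erase y) ∧ PrecedesAll π x (G.neighborFinset x)} := by
  classical
  have hdisj : Disjoint
      (fun π : V ≃ α => PrecedesAll π x (univ.erase x) ∧ PrecedesAll π y (G.neighborFinset y))
      (fun π => PrecedesAll π y (univ.erase y) ∧ PrecedesAll π x (G.neighborFinset x)) := by
    refine Pi.disjoint_iff.2 fun π => Prop.disjoint_iff.2 fun ⟨⟨hx, _⟩, ⟨hy, _⟩⟩ => ?_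
    exact (hx y (by simp [hxy.symm])).asymm (hy x (by simp [hxy]))
  rw [Nat.card_congr (Equiv.subtypeEquivRight (precedesAll_and_iff hxy hall)),
    Nat.card_congr (subtypeOrEquiv _ _ hdisj), Nat.card_sum]

theorem natCard_precedesAll_and_mul_eq (hxy : x ≠ y) (hadj : ¬ G.Adj x y)
    (hall : univ = {x, y} ∪ G.neighborFinset x ∪ G.neighborFinset y) :
    Nat.card {π : V ≃ α //
        PrecedesAll π x (G.neighborFinset x) ∧ PrecedesAll π y (G.neighborFinset y)}
        * Nat.card (V ≃ α) * ((#(G.neighborFinset x) + 1) * (#(G.neighborFinset y) + 1)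
          * Fintype.card V)
      = Nat.card {π : V ≃ α // PrecedesAll π x (G.neighborFinset x)}
          * Nat.card {π : V ≃ α // PrecedesAll π y (G.neighborFinset y)}
          * ((#(G.neighborFinset x) + 1) * (#(G.neighborFinset y) + 1) * Fintype.card V)
        + Nat.card (V ≃ α) ^ 2 * #(G.neighborFinset x ∩ G.neighborFinset y) := by
  have hyx : ¬ G.Adj y x := fun h => hadj h.symm
  have hx := natCard_precedesAll_mul (α := α) (G.notMem_neighborFinset_self x)
  have hy := natCard_precedesAll_mul (α := α) (G.notMem_neighborFinset_self y)
  have hxy' := natCard_precedesAll_erase_and_mul (α := α) (x := x)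
    (G.notMem_neighborFinset_self y) (by simp [hxy, hyx])
  have hyx' := natCard_precedesAll_erase_and_mul (α := α) (x := y)
    (G.notMem_neighborFinset_self x) (by simp [hxy.symm, hadj])
  have hV := card_add_card_inter_neighborFinset hxy hadj hall
  rw [natCard_precedesAll_and_eq_add hxy hall]
  set N := Nat.card (V ≃ α)
  set dB := Nat.card {π : V ≃ α // PrecedesAll π y (G.neighborFinset y)}
  set p := #(G.neighborFinset x)
  set q := #(G.neighborFinset y)
  set n := Fintype.card V
  zify at *
  linear_combination (N : ℤ) * (p + 1) * hxy' + N * (q + 1) * hyx' - dB * (q + 1) * n * hx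
    - N * n * hy - N ^ 2 * hV

end Graph

theorem Nat.eq_iff_and_lt_of_mul_eq_mul_add {a b c P k : ℕ} (hP : 0 < P) (hc : 0 < c)
    (h : a * P = b * P + c * k) : (a = b ↔ k = 0) ∧ (0 < k → b < a) := by
  refine ⟨⟨fun hab => ?_, fun hk => ?_⟩, fun hk => ?_⟩
  · subst hab
    simpa [hc.ne'] using h
  · simpa [hk, hP.ne'] using h
  · exact Nat.lt_of_mul_lt_mul_right (h ▸ Nat.lt_add_of_pos_right (Nat.mul_pos hc hk))

theorem stmt16_general {V : Type*} [Fintype V] [DecidableEq V] (G : SimpleGraph V)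
    [DecidableRel G.Adj] (x y : V) (k : ℕ) (hxy : x ≠ y) (hadj : ¬ G.Adj x y)
    (hk : (G.neighborFinset x ∩ G.neighborFinset y).card = k)
    (hall : (univ : Finset V) = {x, y} ∪ G.neighborFinset x ∪ G.neighborFinset y) :
    (Nat.card {π : V ≃ Fin (Fintype.card V) //
          (∀ u ∈ G.neighborFinset x, π x < π u) ∧ (∀ u ∈ G.neighborFinset y, π y < π u)}
        * Nat.card (V ≃ Fin (Fintype.card V))
      = Nat.card {π : V ≃ Fin (Fintype.card V) // ∀ u ∈ G.neighborFinset x, π x < π u}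
        * Nat.card {π : V ≃ Fin (Fintype.card V) // ∀ u ∈ G.neighborFinset y, π y < π u}
      ↔ k = 0) ∧
    (0 < k →
      Nat.card {π : V ≃ Fin (Fintype.card V) // ∀ u ∈ G.neighborFinset x, π x < π u}
        * Nat.card {π : V ≃ Fin (Fintype.card V) // ∀ u ∈ G.neighborFinset y, π y < π u}
      < Nat.card {π : V ≃ Fin (Fintype.card V) //
          (∀ u ∈ G.neighborFinset x, π x < π u) ∧ (∀ u ∈ G.neighborFinset y, π y < π u)}
        * Nat.card (V ≃ Fin (Fintype.card V))) := by
  have : Nonempty V := ⟨x⟩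
  have : Nonempty (V ≃ Fin (Fintype.card V)) := ⟨Fintype.equivFin V⟩
  subst hk
  exact Nat.eq_iff_and_lt_of_mul_eq_mul_add (by positivity) (pow_pos Nat.card_pos 2)
    (natCard_precedesAll_and_mul_eq hxy hadj hall)

/-- The events "`x` precedes all its neighbors" and "`y` precedes all its neighbors"
under a uniform random permutation are independent iff `k = 0`, and positively
correlated if `k > 0`. -/
theorem stmt16 {V : Type*} [Fintype V] [DecidableEq V] (G : SimpleGraph V)
    [DecidableRel G.Adj] (x y : V) (k l r : ℕ) (hxy : x ≠ y) (hadj : ¬ G.Adj x y)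
    (hk : (G.neighborFinset x ∩ G.neighborFinset y).card = k)
    (hl : (G.neighborFinset x \ G.neighborFinset y).card = l)
    (hr : (G.neighborFinset y \ G.neighborFinset x).card = r)
    (hall : (univ : Finset V) = {x, y} ∪ G.neighborFinset x ∪ G.neighborFinset y) :
    (Nat.card {π : V ≃ Fin (Fintype.card V) //
          (∀ u ∈ G.neighborFinset x, π x < π u) ∧ (∀ u ∈ G.neighborFinset y, π y < π u)}
        * Nat.card (V ≃ Fin (Fintype.card V))
      = Nat.card {π : V ≃ Fin (Fintype.card V) // ∀ u ∈ G.neighborFinset x, π x < π u}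
        * Nat.card {π : V ≃ Fin (Fintype.card V) // ∀ u ∈ G.neighborFinset y, π y < π u}
      ↔ k = 0) ∧
    (0 < k →
      Nat.card {π : V ≃ Fin (Fintype.card V) // ∀ u ∈ G.neighborFinset x, π x < π u}
        * Nat.card {π : V ≃ Fin (Fintype.card V) // ∀ u ∈ G.neighborFinset y, π y < π u}
      < Nat.card {π : V ≃ Fin (Fintype.card V) //
          (∀ u ∈ G.neighborFinset x, π x < π u) ∧ (∀ u ∈ G.neighborFinset y, π y < π u)}
        * Nat.card (V ≃ Fin (Fintype.card V))) :=
  stmt16_general G x y k hxy hadj hk hall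
end

section
/- For a uniformly random permutation π of the vertices of a finite graph G, the expected number of vertices v such that v precedes all of its neighbors in π equals the Caro-Wei bound λ(G) = Σ_{v∈V(G)} 1/(deg(v)+1). Moreover the set of such vertices is always an independent set, hence β(G) ≥ λ(G). -/
open SimpleGraph Finset

section Aux
variable {V : Type*} [Fintype V] [DecidableEq V]

private lemma stmt17_step {n : ℕ} (T : Finset V) (x y : V) (hx : x ∈ T) (hy : y ∈ T)
    (π : V ≃ Fin n) (h : ∀ u ∈ T, u ≠ x → π x < π u) :
    ∀ u ∈ T, u ≠ y → ((Equiv.swap x y).trans π) y < ((Equiv.swap x y).trans π) u := by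
  intro u hu huy
  simp only [Equiv.trans_apply, Equiv.swap_apply_right]
  by_cases hux : u = x
  · subst hux
    rw [Equiv.swap_apply_left]
    exact h y hy (fun hyx => huy (hyx ▸ rfl))
  · rw [Equiv.swap_apply_of_ne_of_ne hux huy]
    exact h u hu hux

private lemma stmt17_count {n : ℕ} (T : Finset V) {v : V} (hv : v ∈ T) :
    ((univ.filter (fun π : V ≃ Fin n => ∀ u ∈ T, u ≠ v → π v < π u)).card) * T.card
      = Fintype.card (V ≃ Fin n) := by
  classical
  set A : V → Finset (V ≃ Fin n) :=
    fun x => univ.filter (fun π => ∀ u ∈ T, u ≠ x → π x < π u) with hA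
  have hcardeq : ∀ x ∈ T, (A x).card = (A v).card := by
    intro x hx
    apply Finset.card_bij' (fun π _ => (Equiv.swap x v).trans π)
      (fun π _ => (Equiv.swap v x).trans π)
    · intro π hπ
      simp only [hA, mem_filter, mem_univ, true_and] at hπ ⊢
      exact stmt17_step T x v hx hv π hπ
    · intro π hπ
      simp only [hA, mem_filter, mem_univ, true_and] at hπ ⊢
      exact stmt17_step T v x hv hx π hπ
    · intro π _
      ext a
      simp [Equiv.swap_comm x v]
    · intro π _
      ext a
      simp [Equiv.swap_comm x v]
  have hpart : (univ : Finset (V ≃ Fin n)) = T.biUnion A := by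
    apply Finset.Subset.antisymm
    · intro π _
      obtain ⟨u, hu, hmin⟩ := Finset.exists_min_image T π ⟨v, hv⟩
      refine Finset.mem_biUnion.2 ⟨u, hu, ?_⟩
      simp only [hA, mem_filter, mem_univ, true_and]
      intro w hw hwu
      exact lt_of_le_of_ne (hmin w hw) (fun he => hwu (π.injective he).symm)
    · exact Finset.subset_univ _
  have hdisj : ∀ x ∈ T, ∀ y ∈ T, x ≠ y → Disjoint (A x) (A y) := by
    intro x hx y hy hxy
    rw [Finset.disjoint_left]
    intro π hπx hπy
    simp only [hA, mem_filter, mem_univ, true_and] at hπx hπy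
    exact absurd (hπy x hx hxy) (not_lt.2 (le_of_lt (hπx y hy (Ne.symm hxy))))
  have := Finset.card_biUnion hdisj
  rw [← hpart, Finset.card_univ] at this
  rw [Finset.sum_congr rfl hcardeq, Finset.sum_const, smul_eq_mul] at this
  rw [mul_comm]
  exact this.symm

private lemma stmt17_key {n : ℕ} (G : SimpleGraph V) [DecidableRel G.Adj] (v : V) :
    ((univ.filter (fun π : V ≃ Fin n => ∀ u, G.Adj v u → π v < π u)).card)
      * (G.degree v + 1) = Fintype.card (V ≃ Fin n) := by
  classical
  have hmem : v ∈ insert v (G.neighborFinset v) := Finset.mem_insert_self _ _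
  have h := stmt17_count (n := n) (insert v (G.neighborFinset v)) hmem
  have hfilter : (univ.filter (fun π : V ≃ Fin n =>
      ∀ u ∈ insert v (G.neighborFinset v), u ≠ v → π v < π u))
      = univ.filter (fun π : V ≃ Fin n => ∀ u, G.Adj v u → π v < π u) := by
    apply Finset.filter_congr
    intro π _
    simp only [Finset.mem_insert, SimpleGraph.mem_neighborFinset, eq_iff_iff]
    constructor
    · intro h u hu
      exact h u (Or.inr hu) (fun he => G.irrefl (he ▸ hu))
    · intro h u hu hne
      rcases hu with rfl | hu
      · exact absurd rfl hne
      · exact h u hu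
  rw [hfilter] at h
  rwa [Finset.card_insert_of_notMem (G.notMem_neighborFinset_self v),
    G.card_neighborFinset_eq_degree] at h

end Aux

/-- Over a uniformly random permutation, the expected number of vertices preceding
all their neighbors equals the Caro-Wei bound `λ(G)`; the set of such vertices is
always independent, hence `β(G) ≥ λ(G)`. -/
theorem stmt17 {V : Type*} [Fintype V] [DecidableEq V] (G : SimpleGraph V)
    [DecidableRel G.Adj] :
    (∑ π : V ≃ Fin (Fintype.card V),
        (Nat.card {v : V // ∀ u, G.Adj v u → π v < π u} : ℝ))
      = (Nat.card (V ≃ Fin (Fintype.card V)) : ℝ)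
          * ∑ v : V, (1 : ℝ) / ((G.degree v : ℝ) + 1) ∧
    (∀ π : V ≃ Fin (Fintype.card V), ∀ v w : V,
      (∀ u, G.Adj v u → π v < π u) → (∀ u, G.Adj w u → π w < π u) → ¬ G.Adj v w) ∧
    (∃ s : Finset V, (∀ u ∈ s, ∀ w ∈ s, ¬ G.Adj u w) ∧
      (∑ v : V, (1 : ℝ) / ((G.degree v : ℝ) + 1)) ≤ (s.card : ℝ)) := by
  classical
  set n := Fintype.card V with hn
  have hB : ∀ π : V ≃ Fin n, ∀ v w : V,
      (∀ u, G.Adj v u → π v < π u) → (∀ u, G.Adj w u → π w < π u) → ¬ G.Adj v w := by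
    intro π v w hv hw hadj
    exact lt_asymm (hv w hadj) (hw v hadj.symm)
  have hcount : ∀ π : V ≃ Fin n,
      (Nat.card {v : V // ∀ u, G.Adj v u → π v < π u} : ℝ)
        = ((univ.filter (fun v : V => ∀ u, G.Adj v u → π v < π u)).card : ℝ) := by
    intro π
    rw [Nat.card_eq_fintype_card, Fintype.card_subtype]
  have hA : (∑ π : V ≃ Fin n,
        (Nat.card {v : V // ∀ u, G.Adj v u → π v < π u} : ℝ))
      = (Nat.card (V ≃ Fin n) : ℝ) * ∑ v : V, (1 : ℝ) / ((G.degree v : ℝ) + 1) := by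
    have swap : (∑ π : V ≃ Fin n,
        ((univ.filter (fun v : V => ∀ u, G.Adj v u → π v < π u)).card : ℝ))
        = ∑ v : V, ((univ.filter
            (fun π : V ≃ Fin n => ∀ u, G.Adj v u → π v < π u)).card : ℝ) := by
      simp only [Finset.card_filter, Nat.cast_sum]
      rw [Finset.sum_comm]
    rw [Finset.sum_congr rfl (fun π _ => hcount π), swap,
      Finset.mul_sum]
    apply Finset.sum_congr rfl
    intro v _
    have h := stmt17_key (n := n) G v
    have hd : ((G.degree v : ℝ) + 1) ≠ 0 := by positivity
    have : ((univ.filter (fun π : V ≃ Fin n =>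
        ∀ u, G.Adj v u → π v < π u)).card : ℝ) * ((G.degree v : ℝ) + 1)
        = (Fintype.card (V ≃ Fin n) : ℝ) := by
      exact_mod_cast congrArg (Nat.cast : ℕ → ℝ) h
    rw [Nat.card_eq_fintype_card, mul_one_div, eq_div_iff hd]
    exact this
  refine ⟨hA, hB, ?_⟩
  -- part C
  have hne : Nonempty (V ≃ Fin n) := ⟨Fintype.equivFin V⟩
  have huniv : (univ : Finset (V ≃ Fin n)).Nonempty := Finset.univ_nonempty
  have hsum : (∑ _π : V ≃ Fin n, ∑ v : V, (1 : ℝ) / ((G.degree v : ℝ) + 1))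
      ≤ ∑ π : V ≃ Fin n, (Nat.card {v : V // ∀ u, G.Adj v u → π v < π u} : ℝ) := by
    rw [hA, Finset.sum_const, Finset.card_univ, nsmul_eq_mul, Nat.card_eq_fintype_card]
  obtain ⟨π, _, hπ⟩ := Finset.exists_le_of_sum_le huniv hsum
  refine ⟨univ.filter (fun v : V => ∀ u, G.Adj v u → π v < π u), ?_, ?_⟩
  · intro u hu w hw
    simp only [mem_filter, mem_univ, true_and] at hu hw
    exact hB π u w hu hw
  · exact hπ.trans (hcount π).le
end
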